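/- arXiv:2306.15208 — 12 statements merged into one kernel-verified Lean document; each statement's English description precedes it below -/
import Mathlib

section
/- Let f be a positive strictly convex function on (0,l), let θ_1,…,θ_n ∈ (0,l) with ∑ θ_i = ml where 0 < m < n, and set σ = ml/n. Then for every positive integer α, (∑_{i=1}^n f(θ_i))^{2α} − (n f(σ))^α (∑_{i=1}^n f(θ_i))^α ≥ (f(σ))^α [(∑_{i=1}^n f(θ_i))^α − (n f(σ))^α], with equality if and only if θ_1 = θ_2 = ⋯ = θ_n = σ. -/
/-!
Write `S = ∑ f(θᵢ)` and `c = f(σ)`. Since `σ` is the average of the `θᵢ`, Jensen's inequality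
gives `n c ≤ S`, with equality exactly when all `θᵢ` coincide (strict convexity). Putting
`a = S^α`, `b = (n c)^α`, `c' = c^α`, the claimed inequality is `(a - c')(a - b) ≥ 0`, which holds
because `c' ≤ b ≤ a`; it is an equality iff `a = b`, i.e. iff `S = n c`.
-/

open Finset

section EqualWeights

variable {𝕜 E ι : Type*} [Field 𝕜] [LinearOrder 𝕜] [IsStrictOrderedRing 𝕜]
  [AddCommGroup E] [Module 𝕜 E] [Fintype ι] [Nonempty ι] {s : Set E} {f : E → 𝕜} {p : ι → E}

lemma sum_inv_card_eq_one : ∑ _i : ι, ((Fintype.card ι : 𝕜))⁻¹ = 1 := by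
  simp [Fintype.card_ne_zero]

lemma Convex.inv_card_smul_sum_mem (hs : Convex 𝕜 s) (hp : ∀ i, p i ∈ s) :
    (Fintype.card ι : 𝕜)⁻¹ • ∑ i, p i ∈ s := by
  rw [smul_sum]
  exact hs.sum_mem (fun _ _ ↦ by positivity) sum_inv_card_eq_one fun i _ ↦ hp i

lemma ConvexOn.card_mul_map_average_le_sum (hf : ConvexOn 𝕜 s f) (hp : ∀ i, p i ∈ s) :
    Fintype.card ι * f ((Fintype.card ι : 𝕜)⁻¹ • ∑ i, p i) ≤ ∑ i, f (p i) := by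
  have hn : (0 : 𝕜) < Fintype.card ι := by exact_mod_cast Fintype.card_pos
  have := hf.map_sum_le (t := univ) (fun _ _ ↦ (inv_pos.2 hn).le) sum_inv_card_eq_one
    fun i _ ↦ hp i
  rw [← smul_sum, ← smul_sum, smul_eq_mul] at this
  rwa [← le_inv_mul_iff₀ hn]

lemma StrictConvexOn.sum_eq_card_mul_map_average_iff (hf : StrictConvexOn 𝕜 s f)
    (hp : ∀ i, p i ∈ s) :
    ∑ i, f (p i) = Fintype.card ι * f ((Fintype.card ι : 𝕜)⁻¹ • ∑ i, p i) ↔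
      ∀ i, p i = (Fintype.card ι : 𝕜)⁻¹ • ∑ j, p j := by
  have hn : (0 : 𝕜) < Fintype.card ι := by exact_mod_cast Fintype.card_pos
  have := hf.map_sum_eq_iff_of_pos (t := univ) (fun _ _ ↦ inv_pos.2 hn) sum_inv_card_eq_one
    fun i _ ↦ hp i
  rw [← smul_sum, ← smul_sum, smul_eq_mul] at this
  rw [eq_comm, ← eq_inv_mul_iff_mul_eq₀ hn.ne', this]
  refine ⟨fun h i ↦ ?_, fun h j _ k _ ↦ (h j).trans (h k).symm⟩
  rw [sum_congr rfl fun j _ ↦ h (mem_univ j) (mem_univ i), sum_const, card_univ,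
    ← Nat.cast_smul_eq_nsmul 𝕜, inv_smul_smul₀ hn.ne']

end EqualWeights

section Factorization

variable {R : Type*} [CommRing R] [LinearOrder R] [IsStrictOrderedRing R] {a b c : R}

lemma mul_sub_le_sq_sub_mul (hcb : c ≤ b) (hba : b ≤ a) : c * (a - b) ≤ a ^ 2 - b * a := by
  nlinarith [mul_nonneg (sub_nonneg.2 (hcb.trans hba)) (sub_nonneg.2 hba)]

lemma sq_sub_mul_eq_mul_sub_iff (hcb : c ≤ b) (hba : b ≤ a) :
    a ^ 2 - b * a = c * (a - b) ↔ a = b := by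
  have : a ^ 2 - b * a - c * (a - b) = (a - c) * (a - b) := by ring
  rw [← sub_eq_zero, this, mul_eq_zero, sub_eq_zero, sub_eq_zero]
  exact ⟨fun h ↦ h.elim (fun hac ↦ le_antisymm (hac.le.trans hcb) hba) id, Or.inr⟩

end Factorization

theorem stmt1_general (n : ℕ) (l m : ℝ) (hl : 0 < l) (hm0 : 0 < m)
    (f : ℝ → ℝ) (hfpos : ∀ x ∈ Set.Ioo (0:ℝ) l, 0 < f x)
    (hfconv : StrictConvexOn ℝ (Set.Ioo (0:ℝ) l) f)
    (θ : Fin n → ℝ) (hθ : ∀ i, θ i ∈ Set.Ioo (0:ℝ) l)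
    (hsum : ∑ i, θ i = m * l) (α : ℕ) (hα : 0 < α) :
    (f (m * l / n)) ^ α * ((∑ i, f (θ i)) ^ α - ((n : ℝ) * f (m * l / n)) ^ α)
      ≤ (∑ i, f (θ i)) ^ (2 * α) - ((n : ℝ) * f (m * l / n)) ^ α * (∑ i, f (θ i)) ^ α
    ∧ ((∑ i, f (θ i)) ^ (2 * α) - ((n : ℝ) * f (m * l / n)) ^ α * (∑ i, f (θ i)) ^ α
        = (f (m * l / n)) ^ α * ((∑ i, f (θ i)) ^ α - ((n : ℝ) * f (m * l / n)) ^ α)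
      ↔ ∀ i, θ i = m * l / n) := by
  have hn : n ≠ 0 := by
    rintro rfl
    simp only [univ_eq_empty, sum_empty] at hsum
    exact (mul_pos hm0 hl).ne hsum
  have : Nonempty (Fin n) := ⟨⟨0, Nat.pos_of_ne_zero hn⟩⟩
  have hσ : (n : ℝ)⁻¹ • ∑ i, θ i = m * l / n := by
    rw [hsum, smul_eq_mul, div_eq_inv_mul]
  set σ := m * l / n
  set S := ∑ i, f (θ i)
  have hc : 0 < f σ := by
    have := (convex_Ioo (𝕜 := ℝ) 0 l).inv_card_smul_sum_mem hθ
    rw [Fintype.card_fin, hσ] at this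
    exact hfpos σ this
  have hJensen : n * f σ ≤ S := by
    have := hfconv.convexOn.card_mul_map_average_le_sum hθ
    rwa [Fintype.card_fin, hσ] at this
  have hJensen_eq : S = n * f σ ↔ ∀ i, θ i = σ := by
    have := hfconv.sum_eq_card_mul_map_average_iff hθ
    rwa [Fintype.card_fin, hσ] at this
  have hS : 0 ≤ S := (by positivity : (0 : ℝ) ≤ n * f σ).trans hJensen
  have hCB : f σ ^ α ≤ (n * f σ) ^ α :=
    pow_le_pow_left₀ hc.le (le_mul_of_one_le_left hc.le (Nat.one_le_cast.2 (by omega))) α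
  have hBA : (n * f σ) ^ α ≤ S ^ α := pow_le_pow_left₀ (by positivity) hJensen α
  rw [pow_mul', sq_sub_mul_eq_mul_sub_iff hCB hBA, pow_left_inj₀ hS (by positivity) hα.ne',
    hJensen_eq]
  exact ⟨mul_sub_le_sq_sub_mul hCB hBA, Iff.rfl⟩

theorem stmt1 (n : ℕ) (hn : 2 ≤ n) (l m : ℝ) (hl : 0 < l) (hm0 : 0 < m) (hmn : m < n)
    (f : ℝ → ℝ) (hfpos : ∀ x ∈ Set.Ioo (0:ℝ) l, 0 < f x)
    (hfconv : StrictConvexOn ℝ (Set.Ioo (0:ℝ) l) f)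
    (θ : Fin n → ℝ) (hθ : ∀ i, θ i ∈ Set.Ioo (0:ℝ) l)
    (hsum : ∑ i, θ i = m * l) (α : ℕ) (hα : 0 < α) :
    (f (m * l / n)) ^ α * ((∑ i, f (θ i)) ^ α - ((n : ℝ) * f (m * l / n)) ^ α)
      ≤ (∑ i, f (θ i)) ^ (2 * α) - ((n : ℝ) * f (m * l / n)) ^ α * (∑ i, f (θ i)) ^ α
    ∧ ((∑ i, f (θ i)) ^ (2 * α) - ((n : ℝ) * f (m * l / n)) ^ α * (∑ i, f (θ i)) ^ α
        = (f (m * l / n)) ^ α * ((∑ i, f (θ i)) ^ α - ((n : ℝ) * f (m * l / n)) ^ α)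
      ↔ ∀ i, θ i = m * l / n) :=
  stmt1_general n l m hl hm0 f hfpos hfconv θ hθ hsum α hα
end

section
/- Let θ_1,…,θ_n ∈ (0,π/2) with ∑_{i=1}^n θ_i = π. Then for every positive integer α, (∑_{i=1}^n sec θ_i)^{2α} − (n sec(π/n))^α (∑_{i=1}^n sec θ_i)^α ≥ (sec(π/n))^α [(∑_{i=1}^n sec θ_i)^α − (n sec(π/n))^α], with equality if and only if θ_1 = ⋯ = θ_n = π/n. -/
/-!
Since `cos` is strictly concave and positive on `(-π/2, π/2)`, `sec` is strictly convex there, so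
Jensen's inequality gives `S := ∑ sec θᵢ ≥ n sec(π/n)`, with equality iff all `θᵢ` equal `π/n`.
The difference of the two sides of the claimed inequality factors as
`(S^α - (n sec(π/n))^α) (S^α - sec(π/n)^α)`, whose second factor is positive because
`S ≥ n sec(π/n) > sec(π/n)`.
-/

open Real Set Finset

lemma StrictConcaveOn.strictConvexOn_one_div {E : Type*} [AddCommGroup E] [Module ℝ E]
    {s : Set E} {f : E → ℝ} (hf : StrictConcaveOn ℝ s f) (hpos : ∀ x ∈ s, 0 < f x) :
    StrictConvexOn ℝ s fun x => 1 / f x := by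
  refine ⟨hf.1, fun x hx y hy hxy a b ha hb hab => ?_⟩
  have hfx := hpos x hx
  have hfy := hpos y hy
  have hinv := (convexOn_zpow (𝕜 := ℝ) (-1)).2 (mem_Ioi.2 hfx) (mem_Ioi.2 hfy) ha.le hb.le hab
  simp only [smul_eq_mul, zpow_neg, zpow_one] at hinv ⊢
  calc 1 / f (a • x + b • y) < 1 / (a * f x + b * f y) :=
        one_div_lt_one_div_of_lt (by positivity) (hf.2 hx hy hxy ha hb hab)
    _ ≤ a * (1 / f x) + b * (1 / f y) := by simpa only [one_div] using hinv

lemma strictConvexOn_one_div_cos :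
    StrictConvexOn ℝ (Ioo (-(π / 2)) (π / 2)) fun x => 1 / cos x :=
  (strictConcaveOn_cos_Icc.subset Ioo_subset_Icc_self (convex_Ioo _ _)).strictConvexOn_one_div
    fun _ hx => cos_pos_of_mem_Ioo hx

section UniformJensen

variable {ι : Type*} [Fintype ι] [Nonempty ι] {s : Set ℝ} {f : ℝ → ℝ} {p : ι → ℝ}

lemma ConvexOn.card_mul_map_mean_le_sum (hf : ConvexOn ℝ s f) (hp : ∀ i, p i ∈ s) :
    Fintype.card ι * f ((∑ i, p i) / Fintype.card ι) ≤ ∑ i, f (p i) := by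
  have hcard : (0 : ℝ) < Fintype.card ι := by exact_mod_cast Fintype.card_pos
  have := hf.map_sum_le (t := univ) (w := fun _ => (Fintype.card ι : ℝ)⁻¹)
    (fun _ _ => by positivity) (by simp) (fun i _ => hp i)
  simp only [smul_eq_mul, inv_mul_eq_div, ← sum_div] at this
  rwa [← le_div_iff₀' hcard]

lemma StrictConvexOn.card_mul_map_mean_eq_sum_iff (hf : StrictConvexOn ℝ s f)
    (hp : ∀ i, p i ∈ s) :
    Fintype.card ι * f ((∑ i, p i) / Fintype.card ι) = ∑ i, f (p i) ↔
      ∀ i, p i = (∑ j, p j) / Fintype.card ι := by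
  have hcard : (0 : ℝ) < Fintype.card ι := by exact_mod_cast Fintype.card_pos
  have := hf.map_sum_eq_iff_of_pos (t := univ) (w := fun _ => (Fintype.card ι : ℝ)⁻¹)
    (fun _ _ => by positivity) (by simp) (fun i _ => hp i)
  simp only [smul_eq_mul, inv_mul_eq_div, ← sum_div] at this
  rw [mul_comm, ← eq_div_iff hcard.ne', this]
  constructor
  · intro hconst i
    rw [eq_div_iff hcard.ne', sum_congr rfl fun j _ => hconst (mem_univ j) (mem_univ i)]
    simp [mul_comm]
  · intro hmean j _ k _
    rw [hmean j, hmean k]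

end UniformJensen

lemma pow_two_mul_sub_sub_eq_mul (c N S : ℝ) (α : ℕ) :
    S ^ (2 * α) - N ^ α * S ^ α - c ^ α * (S ^ α - N ^ α)
      = (S ^ α - N ^ α) * (S ^ α - c ^ α) := by
  ring

lemma pow_mul_sub_le_pow_two_mul_sub {c N S : ℝ} (α : ℕ) (hc : 0 ≤ c) (hcS : c ≤ S)
    (hN : 0 ≤ N) (hNS : N ≤ S) :
    c ^ α * (S ^ α - N ^ α) ≤ S ^ (2 * α) - N ^ α * S ^ α := by
  have := mul_nonneg (sub_nonneg.2 (pow_le_pow_left₀ hN hNS α))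
    (sub_nonneg.2 (pow_le_pow_left₀ hc hcS α))
  linarith [pow_two_mul_sub_sub_eq_mul c N S α]

lemma pow_mul_sub_eq_pow_two_mul_sub_iff {c N S : ℝ} {α : ℕ} (hα : α ≠ 0) (hc : 0 ≤ c)
    (hcS : c < S) (hN : 0 ≤ N) :
    S ^ (2 * α) - N ^ α * S ^ α = c ^ α * (S ^ α - N ^ α) ↔ S = N := by
  have hpow : S ^ α - c ^ α ≠ 0 := (sub_pos.2 (pow_lt_pow_left₀ hcS hc hα)).ne'
  rw [← sub_eq_zero, pow_two_mul_sub_sub_eq_mul, mul_eq_zero, or_iff_left hpow, sub_eq_zero,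
    pow_left_inj₀ (hc.trans hcS.le) hN hα]

open Real in
theorem stmt4 (n : ℕ) (hn : 3 ≤ n)
    (θ : Fin n → ℝ) (hθ : ∀ i, θ i ∈ Set.Ioo (0:ℝ) (π / 2))
    (hsum : ∑ i, θ i = π) (α : ℕ) (hα : 0 < α) :
    (1 / cos (π / n)) ^ α *
        ((∑ i, 1 / cos (θ i)) ^ α - ((n : ℝ) * (1 / cos (π / n))) ^ α)
      ≤ (∑ i, 1 / cos (θ i)) ^ (2 * α)
          - ((n : ℝ) * (1 / cos (π / n))) ^ α * (∑ i, 1 / cos (θ i)) ^ α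
    ∧ ((∑ i, 1 / cos (θ i)) ^ (2 * α)
          - ((n : ℝ) * (1 / cos (π / n))) ^ α * (∑ i, 1 / cos (θ i)) ^ α
        = (1 / cos (π / n)) ^ α *
            ((∑ i, 1 / cos (θ i)) ^ α - ((n : ℝ) * (1 / cos (π / n))) ^ α)
      ↔ ∀ i, θ i = π / n) := by
  have : Nonempty (Fin n) := ⟨⟨0, by omega⟩⟩
  have hn3 : (3 : ℝ) ≤ n := by exact_mod_cast hn
  have hmem : ∀ i, θ i ∈ Ioo (-(π / 2)) (π / 2) := fun i =>
    ⟨by linarith [(hθ i).1, pi_pos], (hθ i).2⟩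
  have hjensen := strictConvexOn_one_div_cos.convexOn.card_mul_map_mean_le_sum hmem
  have hjensen_eq := strictConvexOn_one_div_cos.card_mul_map_mean_eq_sum_iff hmem
  simp only [Fintype.card_fin, hsum] at hjensen hjensen_eq
  have hπn : π / n < π / 2 := div_lt_div_of_pos_left pi_pos two_pos (by linarith)
  have hsec_pos : 0 < 1 / cos (π / n) := one_div_pos.2 <| cos_pos_of_mem_Ioo
    ⟨by linarith [pi_pos, show 0 ≤ π / n by positivity], hπn⟩
  have hsec_lt : 1 / cos (π / n) < n * (1 / cos (π / n)) := by nlinarith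
  refine ⟨pow_mul_sub_le_pow_two_mul_sub α hsec_pos.le (hsec_lt.le.trans hjensen)
    (by positivity) hjensen, ?_⟩
  rw [pow_mul_sub_eq_pow_two_mul_sub_iff hα.ne' hsec_pos.le (hsec_lt.trans_le hjensen)
    (by positivity), eq_comm, hjensen_eq]
end

section
/- Let θ_1,…,θ_n ∈ (0,π/2) with ∑_{i=1}^n θ_i = π. Then for all positive integers α, k with k ≥ 2, (∑_{i=1}^n tan θ_i)^{2α} − (n tan(π/n))^α (∑_{i=1}^n tan θ_i)^α ≤ (∑_{i=1}^n tan θ_i)^{kα} − (n tan(π/n))^{kα}, with equality if and only if θ_1 = ⋯ = θ_n = π/n. -/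
/-!
Jensen's inequality for the strictly convex function `tan` on `(0, π/2)` gives
`S := ∑ tan θᵢ ≥ T := n tan (π/n)`, with equality exactly when all `θᵢ = π/n`, and `T > π > 1`.
With `x = S^α ≥ y = T^α > 1` the claim becomes `x² - y x ≤ x^k - y^k`, an equality for `x = y`
and strict for `x > y`.
-/

open Real Set

lemma strictConvexOn_tan : StrictConvexOn ℝ (Ico 0 (π / 2)) tan := by
  refine StrictMonoOn.strictConvexOn_of_deriv (convex_Ico _ _)
    (continuousOn_tan_Ioo.mono fun x hx ↦ ⟨by linarith [pi_pos, hx.1], hx.2⟩) ?_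
  rw [interior_Ico]
  intro x hx y hy hxy
  have hcos_y : 0 < cos y := cos_pos_of_mem_Ioo ⟨by linarith [pi_pos, hy.1], hy.2⟩
  have hcos : cos y < cos x :=
    cos_lt_cos_of_nonneg_of_le_pi_div_two hx.1.le hy.2.le hxy
  simp only [deriv_tan]
  gcongr

lemma StrictConvexOn.mul_map_div_le_sum {n : ℕ} (hn : 0 < n) {s : Set ℝ} {f : ℝ → ℝ}
    (hf : StrictConvexOn ℝ s f) {p : Fin n → ℝ} (hp : ∀ i, p i ∈ s) :
    n * f ((∑ i, p i) / n) ≤ ∑ i, f (p i) ∧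
      (n * f ((∑ i, p i) / n) = ∑ i, f (p i) ↔ ∀ i, p i = (∑ i, p i) / n) := by
  have hn' : (0 : ℝ) < n := by exact_mod_cast hn
  have hw₀ : ∀ i ∈ (Finset.univ : Finset (Fin n)), (0 : ℝ) < (n : ℝ)⁻¹ :=
    fun _ _ ↦ by positivity
  have hw₁ : ∑ _i : Fin n, (n : ℝ)⁻¹ = 1 := by simp [hn'.ne']
  have hmem : ∀ i ∈ (Finset.univ : Finset (Fin n)), p i ∈ s := fun i _ ↦ hp i
  have hle := hf.convexOn.map_sum_le (fun i hi ↦ (hw₀ i hi).le) hw₁ hmem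
  have heq := hf.map_sum_eq_iff hw₀ hw₁ hmem
  simp only [Finset.mem_univ, true_implies, smul_eq_mul, inv_mul_eq_div, ← Finset.sum_div]
    at hle heq
  rw [← le_div_iff₀' hn', mul_comm, ← eq_div_iff hn'.ne']
  exact ⟨hle, heq⟩

lemma pi_lt_natCast_mul_tan_pi_div {n : ℕ} (hn : 2 < n) : π < n * tan (π / n) := by
  have hn' : (2 : ℝ) < n := by exact_mod_cast hn
  have hpos : 0 < π / n := by positivity
  have hlt : π / n < π / 2 := by gcongr
  calc π = n * (π / n) := by field_simp
    _ < n * tan (π / n) := by gcongr; exact lt_tan hpos hlt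

lemma sq_sub_mul_lt_pow_sub_pow {s t : ℝ} (ht : 0 < t) (hts : t < s) (hs : 1 ≤ s) {k : ℕ}
    (hk : 2 ≤ k) : s ^ 2 - t * s < s ^ k - t ^ k := by
  induction k, hk using Nat.le_induction with
  | base => nlinarith
  | succ k _ ih =>
    have hpow : t ^ k < s ^ k := by gcongr
    -- s^(k+1) - t^(k+1) - (s^k - t^k) = (s - 1)(s^k - t^k) + t^k (s - t)
    nlinarith [pow_succ s k, pow_succ t k, pow_pos ht k]

theorem stmt7 (n : ℕ) (hn : 3 ≤ n)
    (θ : Fin n → ℝ) (hθ : ∀ i, θ i ∈ Set.Ioo (0:ℝ) (π / 2))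
    (hsum : ∑ i, θ i = π) (α k : ℕ) (hα : 0 < α) (hk : 2 ≤ k) :
    (∑ i, tan (θ i)) ^ (2 * α) - ((n : ℝ) * tan (π / n)) ^ α * (∑ i, tan (θ i)) ^ α
      ≤ (∑ i, tan (θ i)) ^ (k * α) - ((n : ℝ) * tan (π / n)) ^ (k * α)
    ∧ ((∑ i, tan (θ i)) ^ (2 * α) - ((n : ℝ) * tan (π / n)) ^ α * (∑ i, tan (θ i)) ^ α
        = (∑ i, tan (θ i)) ^ (k * α) - ((n : ℝ) * tan (π / n)) ^ (k * α)
      ↔ ∀ i, θ i = π / n) := by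
  have hT : 1 < n * tan (π / n) :=
    (by linarith [pi_gt_three] : (1 : ℝ) < π).trans (pi_lt_natCast_mul_tan_pi_div hn)
  have htan : StrictConvexOn ℝ (Ioo 0 (π / 2)) tan :=
    strictConvexOn_tan.subset Ioo_subset_Ico_self (convex_Ioo _ _)
  obtain ⟨hTS, hTS_iff⟩ := htan.mul_map_div_le_sum (by omega) hθ
  rw [hsum] at hTS hTS_iff
  set S := ∑ i, tan (θ i)
  set T := (n : ℝ) * tan (π / n)
  rw [pow_mul', pow_mul', pow_mul']
  rcases hTS.lt_or_eq with hlt | heq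
  · have hlt' := sq_sub_mul_lt_pow_sub_pow (pow_pos (by linarith) α)
      (pow_lt_pow_left₀ hlt (by linarith) hα.ne') (one_le_pow₀ (by linarith)) hk
    exact ⟨hlt'.le, iff_of_false hlt'.ne fun h ↦ hlt.ne (hTS_iff.2 h)⟩
  · rw [← heq]
    exact ⟨by rw [sq, sub_self, sub_self], iff_of_true (by ring) (hTS_iff.1 heq)⟩
end

section
/- Let Γ_n be a convex n-gon circumscribed about a circle of radius R, with half central angles θ_1,…,θ_n ∈ (0,π/2) summing to π, so that its perimeter is L_n = 2R ∑ tan θ_i and its area is A_n = R^2 ∑ tan θ_i. Let L_n* = 2nR tan(π/n) be the perimeter of the regular circumscribed n-gon about the same circle, and d_n = n tan(π/n). Then for every positive integer α, L_n^{2α} − 4^α (d_n A_n)^α ≥ 2^α R^α (tan(π/n))^α [L_n^α − (L_n*)^α], with equality if and only if θ_1 = ⋯ = θ_n = π/n (i.e., Γ_n is regular). -/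
set_option maxHeartbeats 800000

open Real in
lemma strictConvexOn_tan' : StrictConvexOn ℝ (Set.Ioo (0:ℝ) (π/2)) Real.tan := by
  apply strictConvexOn_of_deriv2_pos (convex_Ioo _ _)
  · apply Real.continuousOn_tan.mono
    intro x hx
    exact (Real.cos_pos_of_mem_Ioo ⟨by linarith [hx.1, Real.pi_pos], hx.2⟩).ne'
  · intro x hx
    rw [interior_Ioo] at hx
    have hc : 0 < Real.cos x := Real.cos_pos_of_mem_Ioo ⟨by linarith [hx.1, Real.pi_pos], hx.2⟩
    have hs : 0 < Real.sin x := Real.sin_pos_of_pos_of_lt_pi hx.1 (by linarith [hx.2, Real.pi_pos])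
    have hdtan : deriv Real.tan = fun y => 1 / Real.cos y ^ 2 := funext Real.deriv_tan
    have h1 : HasDerivAt (fun y => Real.cos y ^ 2)
        (2 * Real.cos x ^ 1 * (-Real.sin x)) x := (Real.hasDerivAt_cos x).pow 2
    have h2 : HasDerivAt (fun y => 1 / Real.cos y ^ 2)
        ((0 * Real.cos x ^ 2 - 1 * (2 * Real.cos x ^ 1 * (-Real.sin x))) / (Real.cos x ^ 2) ^ 2)
        x := (hasDerivAt_const x (1:ℝ)).div h1 (by positivity)
    have h3 : deriv^[2] Real.tan x = (0 * Real.cos x ^ 2 - 1 * (2 * Real.cos x ^ 1 * (-Real.sin x)))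
        / (Real.cos x ^ 2) ^ 2 := by
      simp only [Function.iterate_succ, Function.iterate_zero, Function.comp_apply, id_eq]
      rw [hdtan]
      exact h2.deriv
    rw [h3]
    have h4 : (0:ℝ) < (Real.cos x ^ 2) ^ 2 := by positivity
    apply div_pos _ h4
    nlinarith

open Real in
theorem stmt10 (n : ℕ) (hn : 3 ≤ n) (R : ℝ) (hR : 0 < R)
    (θ : Fin n → ℝ) (hθ : ∀ i, θ i ∈ Set.Ioo (0:ℝ) (π / 2))
    (hsum : ∑ i, θ i = π) (α : ℕ) (hα : 0 < α)
    (L A Lstar d : ℝ)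
    (hL : L = 2 * R * ∑ i, tan (θ i))
    (hA : A = R ^ 2 * ∑ i, tan (θ i))
    (hLstar : Lstar = 2 * (n : ℝ) * R * tan (π / n))
    (hd : d = (n : ℝ) * tan (π / n)) :
    2 ^ α * R ^ α * (tan (π / n)) ^ α * (L ^ α - Lstar ^ α)
      ≤ L ^ (2 * α) - 4 ^ α * (d * A) ^ α
    ∧ (L ^ (2 * α) - 4 ^ α * (d * A) ^ α
        = 2 ^ α * R ^ α * (tan (π / n)) ^ α * (L ^ α - Lstar ^ α)
      ↔ ∀ i, θ i = π / n) := by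
  have hπ := Real.pi_pos
  have hn0 : (0:ℝ) < n := by positivity
  have hn3 : (3:ℝ) ≤ n := by exact_mod_cast hn
  have hmem : π / n ∈ Set.Ioo (0:ℝ) (π/2) := by
    constructor
    · positivity
    · rw [div_lt_div_iff₀ hn0 two_pos]; nlinarith
  have ht : 0 < tan (π / n) := Real.tan_pos_of_pos_of_lt_pi_div_two hmem.1 hmem.2
  set S : ℝ := ∑ i, tan (θ i) with hS
  set t : ℝ := tan (π / n) with htdef
  -- Jensen
  have hw : ∑ _i : Fin n, (1:ℝ)/n = 1 := by
    simp [Finset.sum_const, Finset.card_univ]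
    field_simp
  have hconv : ∑ i : Fin n, ((1:ℝ)/n) • θ i = π / n := by
    rw [← Finset.smul_sum, hsum]
    simp [smul_eq_mul]
    ring
  have hjensen : Real.tan (∑ i : Fin n, ((1:ℝ)/n) • θ i)
      ≤ ∑ i : Fin n, ((1:ℝ)/n) • Real.tan (θ i) :=
    strictConvexOn_tan'.convexOn.map_sum_le (fun i _ => by positivity) hw
      (fun i _ => hθ i)
  have hsum' : ∑ i : Fin n, ((1:ℝ)/n) • Real.tan (θ i) = S / n := by
    simp only [smul_eq_mul, ← Finset.mul_sum, ← hS]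
    ring
  have hge : (n:ℝ) * t ≤ S := by
    rw [hconv, hsum'] at hjensen
    rw [htdef]
    calc (n:ℝ) * tan (π/n) ≤ n * (S / n) :=
          mul_le_mul_of_nonneg_left hjensen (le_of_lt hn0)
      _ = S := by field_simp
  have hSpos : 0 < S := lt_of_lt_of_le (by positivity) hge
  have htS : t < S := by nlinarith
  -- equality case of Jensen
  have heqcase : S = (n:ℝ) * t → ∀ i, θ i = π / n := by
    intro hEq i
    have h_eq : ∑ i : Fin n, ((1:ℝ)/n) • Real.tan (θ i)
        ≤ Real.tan (∑ i : Fin n, ((1:ℝ)/n) • θ i) := by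
      rw [hconv, hsum', hEq, htdef]
      rw [mul_comm, mul_div_assoc, div_self (ne_of_gt hn0), mul_one]
    have hall := strictConvexOn_tan'.eq_of_le_map_sum
      (fun i _ => by positivity) hw (fun i _ => hθ i) h_eq
    have hconst : ∀ j, θ j = θ i := fun j =>
      hall (Finset.mem_univ j) (Finset.mem_univ i)
    have hnθ : ∑ j, θ j = n * θ i := by
      rw [Finset.sum_congr rfl (fun j _ => hconst j)]
      simp [Finset.sum_const, Finset.card_univ, mul_comm]
    rw [hsum] at hnθ
    field_simp
    linarith
  -- abbreviations for powers
  set u : ℝ := S ^ α with hu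
  set v : ℝ := t ^ α with hv
  set m : ℝ := (n:ℝ) ^ α with hm
  set ρ : ℝ := R ^ α with hρ
  have hupos : 0 < u := by rw [hu]; exact pow_pos hSpos α
  have hvpos : 0 < v := by rw [hv]; exact pow_pos ht α
  have hρpos : 0 < ρ := by rw [hρ]; exact pow_pos hR α
  have huv : v < u := by
    rw [hu, hv]; exact pow_lt_pow_left₀ htS ht.le hα.ne'
  have hmv : m * v ≤ u := by
    have h := pow_le_pow_left₀ (mul_nonneg hn0.le ht.le) hge α
    rwa [mul_pow, ← hm, ← hv, ← hu] at h
  have h4 : (4:ℝ)^α = 2^α * 2^α := by rw [← mul_pow]; norm_num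
  have e1 : L^(2*α) = 4^α * ρ^2 * u^2 := by
    rw [hL, pow_mul', mul_pow, mul_pow, mul_pow, ← hu, ← hρ, h4]; ring
  have e2 : (4:ℝ)^α * (d*A)^α = 4^α * ρ^2 * (m*v*u) := by
    rw [hd, hA]
    rw [show (n:ℝ) * t * (R^2 * S) = (n:ℝ) * t * R^2 * S by ring]
    rw [mul_pow, mul_pow, mul_pow, ← pow_mul, pow_mul', ← hm, ← hv, ← hu, ← hρ]
    ring
  have e3 : L^α = 2^α * ρ * u := by
    rw [hL, mul_pow, mul_pow, ← hρ, ← hu]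
  have e4 : Lstar^α = 2^α * m * ρ * v := by
    rw [hLstar, mul_pow, mul_pow, mul_pow, ← hm, ← hρ, ← hv]
  have eL : (2:ℝ)^α * R^α * t^α * (L^α - Lstar^α) = 4^α * ρ^2 * (v*(u - m*v)) := by
    rw [e3, e4, h4, ← hρ, ← hv]; ring
  constructor
  · rw [eL, e1, e2]
    have key : 0 ≤ (4:ℝ)^α * ρ^2 * ((u - m*v)*(u - v)) :=
      mul_nonneg (mul_nonneg (pow_nonneg (by norm_num) α) (sq_nonneg ρ))
        (mul_nonneg (sub_nonneg.2 hmv) (sub_nonneg.2 huv.le))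
    nlinarith [key]
  · rw [e1, e2, eL]
    constructor
    · intro h
      have h4ρ : (0:ℝ) < 4^α * ρ^2 := mul_pos (pow_pos (by norm_num) α) (pow_pos hρpos 2)
      have h' : (4:ℝ)^α * ρ^2 * ((u - v)*(u - m*v)) = 0 := by linear_combination h
      have hfac : (u - v)*(u - m*v) = 0 := by
        rcases mul_eq_zero.mp h' with h1 | h1
        · exact absurd h1 h4ρ.ne'
        · exact h1
      have humv : u = m*v := by
        rcases mul_eq_zero.mp hfac with h1 | h1
        · exact absurd h1 (sub_ne_zero.2 huv.ne')
        · linarith [sub_eq_zero.mp h1]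
      have hSnt : S = (n:ℝ)*t := by
        by_contra hne
        have hlt : (n:ℝ)*t < S := lt_of_le_of_ne hge (Ne.symm hne)
        have h2 := pow_lt_pow_left₀ hlt (mul_nonneg hn0.le ht.le) hα.ne'
        rw [mul_pow, ← hm, ← hv, ← hu] at h2
        linarith
      exact heqcase hSnt
    · intro h
      have hSnt : S = (n:ℝ)*t := by
        rw [hS, Finset.sum_congr rfl (fun i _ => by rw [h i])]
        simp [Finset.sum_const, Finset.card_univ, ← htdef]
      have humv : u = m*v := by rw [hu, hv, hm, hSnt, mul_pow]
      rw [humv]; ring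
end

section
/- Let Γ_n be a convex n-gon circumscribed about a circle of radius R with half central angles θ_1,…,θ_n ∈ (0,π/2) summing to π, perimeter L_n = 2R ∑ tan θ_i and area A_n = R^2 ∑ tan θ_i. Let A_n* = nR^2 tan(π/n) and d_n = n tan(π/n). Then for every positive integer α, L_n^{2α} − 4^α (d_n A_n)^α ≥ 4^α (tan(π/n))^α [A_n^α − (A_n*)^α], with equality if and only if Γ_n is regular (θ_1 = ⋯ = θ_n = π/n). -/
open Real

lemma expand_eq' (R s t nn : ℝ) (α : ℕ) :
    (2*R*s)^(2*α) - 4^α*((nn*t)*(R^2*s))^α - 4^α*t^α*((R^2*s)^α - (nn*R^2*t)^α)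
    = (4*R^2)^α * ((s^α - t^α) * (s^α - (nn*t)^α)) := by
  rw [pow_mul]
  simp only [mul_pow]
  ring

lemma tan_sc' : StrictConvexOn ℝ (Set.Ioo 0 (π/2)) tan := by
  apply StrictMonoOn.strictConvexOn_of_deriv (convex_Ioo _ _)
  · intro x hx
    exact (continuousAt_tan.mpr
      (cos_pos_of_mem_Ioo ⟨by linarith [hx.1, pi_pos], hx.2⟩).ne').continuousWithinAt
  · rw [interior_Ioo]
    intro x hx y hy hxy
    rw [deriv_tan, deriv_tan]
    have hcx : 0 < cos x := cos_pos_of_mem_Ioo ⟨by linarith [hx.1, pi_pos], hx.2⟩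
    have hcy : 0 < cos y := cos_pos_of_mem_Ioo ⟨by linarith [hy.1, pi_pos], hy.2⟩
    have h : cos y < cos x := cos_lt_cos_of_nonneg_of_le_pi hx.1.le (by linarith [hy.2, pi_pos]) hxy
    rw [div_lt_div_iff₀ (by positivity) (by positivity)]
    nlinarith

open Real in
theorem stmt11 (n : ℕ) (hn : 3 ≤ n) (R : ℝ) (hR : 0 < R)
    (θ : Fin n → ℝ) (hθ : ∀ i, θ i ∈ Set.Ioo (0:ℝ) (π / 2))
    (hsum : ∑ i, θ i = π) (α : ℕ) (hα : 0 < α)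
    (L A Astar d : ℝ)
    (hL : L = 2 * R * ∑ i, tan (θ i))
    (hA : A = R ^ 2 * ∑ i, tan (θ i))
    (hAstar : Astar = (n : ℝ) * R ^ 2 * tan (π / n))
    (hd : d = (n : ℝ) * tan (π / n)) :
    4 ^ α * (tan (π / n)) ^ α * (A ^ α - Astar ^ α)
      ≤ L ^ (2 * α) - 4 ^ α * (d * A) ^ α
    ∧ (L ^ (2 * α) - 4 ^ α * (d * A) ^ α
        = 4 ^ α * (tan (π / n)) ^ α * (A ^ α - Astar ^ α)
      ↔ ∀ i, θ i = π / n) := by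
  have hn0 : (0:ℝ) < n := by positivity
  set s : ℝ := ∑ i, tan (θ i) with hs_def
  set t : ℝ := tan (π / n) with ht_def
  have hπn : π / n ∈ Set.Ioo (0:ℝ) (π/2) := by
    constructor
    · positivity
    · rw [div_lt_div_iff₀ hn0 (by norm_num)]
      have : (3:ℝ) ≤ n := by exact_mod_cast hn
      nlinarith [pi_pos]
  have ht : 0 < t := tan_pos_of_pos_of_lt_pi_div_two hπn.1 hπn.2
  -- Jensen setup
  have h₀ : ∀ i ∈ Finset.univ (α := Fin n), (0:ℝ) < (n:ℝ)⁻¹ := fun _ _ => by positivity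
  have h₁ : ∑ _i : Fin n, (n:ℝ)⁻¹ = 1 := by
    simp [Finset.card_univ, mul_comm]
    field_simp
  have hmem : ∀ i ∈ Finset.univ (α := Fin n), θ i ∈ Set.Ioo (0:ℝ) (π/2) := fun i _ => hθ i
  have hcenter : ∑ i : Fin n, (n:ℝ)⁻¹ • θ i = π / n := by
    simp only [smul_eq_mul, ← Finset.mul_sum, hsum]
    rw [inv_mul_eq_div]
  have hsumtan : ∑ i : Fin n, (n:ℝ)⁻¹ • tan (θ i) = (n:ℝ)⁻¹ * s := by
    simp only [smul_eq_mul, ← Finset.mul_sum, hs_def]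
  have hjensen : (n:ℝ) * t ≤ s := by
    have := tan_sc'.convexOn.map_sum_le (fun i hi => (h₀ i hi).le) h₁ hmem
    rw [hcenter, hsumtan] at this
    rw [ht_def]
    calc (n:ℝ) * tan (π/n) ≤ (n:ℝ) * ((n:ℝ)⁻¹ * s) := by nlinarith
      _ = s := by field_simp
  have hts : t < s := by
    have h3 : (3:ℝ) ≤ n := by exact_mod_cast hn
    nlinarith [mul_le_mul_of_nonneg_right h3 ht.le]
  -- equality case of Jensen
  have hiff : s = (n:ℝ) * t ↔ ∀ i, θ i = π / n := by
    constructor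
    · intro hst
      have heq : tan (∑ i : Fin n, (n:ℝ)⁻¹ • θ i) = ∑ i : Fin n, (n:ℝ)⁻¹ • tan (θ i) := by
        rw [hcenter, hsumtan, hst, ← ht_def]
        field_simp
      have := (tan_sc'.map_sum_eq_iff h₀ h₁ hmem).mp heq
      intro i
      have := this i (Finset.mem_univ i)
      rwa [hcenter] at this
    · intro h
      rw [hs_def, ht_def]
      simp only [h]
      simp [Finset.card_univ, mul_comm]
  -- key algebraic identity
  have hexp : L ^ (2*α) - 4^α*(d*A)^α - 4^α*t^α*(A^α - Astar^α)
      = (4*R^2)^α * ((s^α - t^α) * (s^α - ((n:ℝ)*t)^α)) := by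
    rw [hL, hA, hAstar, hd]
    exact expand_eq' R s t n α
  have hfac1 : 0 < s^α - t^α :=
    sub_pos.2 (pow_lt_pow_left₀ hts ht.le hα.ne')
  have hfac2 : 0 ≤ s^α - ((n:ℝ)*t)^α :=
    sub_nonneg.2 (pow_le_pow_left₀ (by positivity) hjensen α)
  have hc : (0:ℝ) < (4*R^2)^α := by positivity
  have hprod : 0 ≤ (4*R^2)^α * ((s^α - t^α) * (s^α - ((n:ℝ)*t)^α)) :=
    mul_nonneg hc.le (mul_nonneg hfac1.le hfac2)
  constructor
  · linarith
  · rw [show (L ^ (2 * α) - 4 ^ α * (d * A) ^ α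
        = 4 ^ α * t ^ α * (A ^ α - Astar ^ α)) ↔
        (4*R^2)^α * ((s^α - t^α) * (s^α - ((n:ℝ)*t)^α)) = 0 by
      constructor <;> intro h <;> linarith]
    rw [← hiff]
    constructor
    · intro h
      have hz : s^α - ((n:ℝ)*t)^α = 0 := by
        rcases mul_eq_zero.mp h with h' | h'
        · exact absurd h' hc.ne'
        · rcases mul_eq_zero.mp h' with h'' | h''
          · exact absurd h'' hfac1.ne'
          · exact h''
      have hpow : s^α = ((n:ℝ)*t)^α := by linarith
      by_contra hne
      have hlt : (n:ℝ)*t < s := lt_of_le_of_ne hjensen (Ne.symm hne)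
      exact absurd hpow (pow_lt_pow_left₀ hlt (by positivity) hα.ne').ne'
    · intro h
      rw [h]
      ring
end

section
/- Let Γ_n be a convex n-gon circumscribed about a circle of radius R with half central angles θ_1,…,θ_n ∈ (0,π/2) summing to π, perimeter L_n = 2R ∑ tan θ_i and area A_n = R^2 ∑ tan θ_i. Let L_n* = 2nR tan(π/n) and d_n = n tan(π/n). Assume R = 1/2. Then L_n^2 − 4 d_n A_n ≤ L_n^3 − (L_n*)^3, with equality if and only if Γ_n is regular. -/
open Real in
lemma tan_strictConvexOn : StrictConvexOn ℝ (Set.Ioo (0:ℝ) (π/2)) tan := by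
  apply strictConvexOn_of_deriv2_pos (convex_Ioo _ _)
  · exact fun x hx => (Real.continuousAt_tan.2 (Real.cos_pos_of_mem_Ioo
      ⟨by linarith [hx.1, Real.pi_pos], hx.2⟩).ne').continuousWithinAt
  · intro x hx
    rw [interior_Ioo] at hx
    have hc : Real.cos x > 0 := Real.cos_pos_of_mem_Ioo ⟨by linarith [hx.1, Real.pi_pos], hx.2⟩
    have hs : Real.sin x > 0 := Real.sin_pos_of_pos_of_lt_pi hx.1
      (by linarith [Real.pi_pos, hx.2])
    have h1 : deriv Real.tan = fun y => 1 / Real.cos y ^ 2 := funext Real.deriv_tan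
    have h2 : HasDerivAt (fun y => 1 / Real.cos y ^ 2)
        ((0 * Real.cos x ^ 2 - 1 * (2 * Real.cos x ^ 1 * (-Real.sin x))) / (Real.cos x ^ 2) ^ 2)
        x := by
      exact (hasDerivAt_const x (1:ℝ)).div ((Real.hasDerivAt_cos x).pow 2)
        (by positivity)
    simp only [Function.iterate_succ, Function.iterate_zero, Function.comp_apply, id_eq, h1]
    rw [h2.deriv]
    have : (0 * Real.cos x ^ 2 - 1 * (2 * Real.cos x ^ 1 * (-Real.sin x))) / (Real.cos x ^ 2) ^ 2
        = 2 * Real.sin x / Real.cos x ^ 3 := by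
      field_simp; ring
    rw [this]
    positivity

set_option maxHeartbeats 1000000 in
open Real in
theorem stmt12 (n : ℕ) (hn : 3 ≤ n)
    (θ : Fin n → ℝ) (hθ : ∀ i, θ i ∈ Set.Ioo (0:ℝ) (π / 2))
    (hsum : ∑ i, θ i = π)
    (L A Lstar d : ℝ)
    (hL : L = ∑ i, tan (θ i))
    (hA : A = (1 / 4) * ∑ i, tan (θ i))
    (hLstar : Lstar = (n : ℝ) * tan (π / n))
    (hd : d = (n : ℝ) * tan (π / n)) :
    L ^ 2 - 4 * d * A ≤ L ^ 3 - Lstar ^ 3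
    ∧ (L ^ 2 - 4 * d * A = L ^ 3 - Lstar ^ 3 ↔ ∀ i, θ i = π / n) := by
  have hnR : (0:ℝ) < (n:ℝ) := by positivity
  have hπ := Real.pi_pos
  -- Jensen setup
  set w : Fin n → ℝ := fun _ => 1 / (n:ℝ) with hw
  have hw1 : ∑ i : Fin n, w i = 1 := by
    simp [hw, Finset.sum_const, Finset.card_univ]
    field_simp
  have hcm : ∑ i : Fin n, w i • θ i = π / n := by
    simp only [hw, smul_eq_mul, ← Finset.mul_sum, hsum]
    ring
  have hw0 : ∀ i ∈ Finset.univ, 0 < w i := fun i _ => by positivity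
  have hmem : ∀ i ∈ Finset.univ, θ i ∈ Set.Ioo (0:ℝ) (π/2) := fun i _ => hθ i
  have hjle : tan (π / n) ≤ (1/(n:ℝ)) * ∑ i, tan (θ i) := by
    have := tan_strictConvexOn.convexOn.map_sum_le (fun i _ => (hw0 i (by simp)).le) hw1 hmem
    rw [hcm] at this
    simpa [hw, smul_eq_mul, ← Finset.mul_sum] using this
  have hjeq : tan (π / n) = (1/(n:ℝ)) * ∑ i, tan (θ i) ↔ ∀ i, θ i = π / n := by
    have := tan_strictConvexOn.map_sum_eq_iff hw0 hw1 hmem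
    rw [hcm] at this
    constructor
    · intro h
      have h' : tan (π / n) = ∑ i : Fin n, w i • tan (θ i) := by
        simpa [hw, smul_eq_mul, ← Finset.mul_sum] using h
      intro i
      have := (this.1 h') i (by simp)
      simpa [hcm] using this
    · intro h
      have : ∑ i, Real.tan (θ i) = (n:ℝ) * tan (π / n) := by
        rw [Finset.sum_congr rfl (fun i _ => by rw [h i])]
        simp [Finset.sum_const, Finset.card_univ, mul_comm]
      rw [this]; field_simp
  -- key numeric facts
  have hdgt : (3:ℝ) < d := by
    have h1 : π / n < π / 2 := by
      apply div_lt_div_of_pos_left hπ (by norm_num)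
      have : (2:ℝ) < (n:ℝ) := by exact_mod_cast (by omega : 2 < n)
      linarith
    have h2 : (0:ℝ) < π / n := by positivity
    have h3 : π / n < tan (π / n) := Real.lt_tan h2 h1
    have : (n:ℝ) * (π / n) ≤ (n:ℝ) * tan (π/n) := by nlinarith
    have hπn : (n:ℝ) * (π / n) = π := by field_simp
    have : π ≤ (n:ℝ) * tan (π/n) := by linarith [hπn ▸ this]
    linarith [Real.pi_gt_three, hd ▸ this]
  have hLd : d ≤ L := by
    rw [hL, hd]
    have := mul_le_mul_of_nonneg_left hjle hnR.le
    calc (n:ℝ) * tan (π/n) ≤ (n:ℝ) * ((1/(n:ℝ)) * ∑ i, tan (θ i)) := this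
      _ = ∑ i, tan (θ i) := by field_simp
  have hLdiff : L ^ 2 - 4 * d * A = L ^ 2 - d * L := by
    rw [hA, hL]; ring
  have hLs : Lstar = d := by rw [hLstar, hd]
  have hfac : L ^ 3 - Lstar ^ 3 - (L ^ 2 - 4 * d * A) = (L - d) * (L^2 + L*d + d^2 - L) := by
    rw [hLs, hLdiff]; ring
  have hpos : 0 < L^2 + L*d + d^2 - L := by nlinarith
  constructor
  · nlinarith [mul_nonneg (sub_nonneg.2 hLd) hpos.le]
  · rw [show (L ^ 2 - 4 * d * A = L ^ 3 - Lstar ^ 3) ↔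
        ((L - d) * (L^2 + L*d + d^2 - L) = 0) by constructor <;> intro h <;> nlinarith]
    rw [mul_eq_zero]
    constructor
    · rintro (h | h)
      · have hLd' : L = d := by linarith
        apply hjeq.1
        have : ∑ i, tan (θ i) = (n:ℝ) * tan (π/n) := by rw [← hL, ← hd, hLd']
        rw [this]; field_simp
      · exact absurd h hpos.ne'
    · intro h
      left
      have h2 := hjeq.2 h
      have : L = d := by
        rw [hL, hd]
        field_simp at h2
        linarith [h2]
      linarith
end

section
/- Let f be a positive C² function on (0,l) with f′(θ)f″(θ) ≠ 0 satisfying (f′(θ))² − f(θ)f″(θ) = μ for a constant μ and all θ ∈ (0,l). Suppose f″ < 0 and f′ > 0 on (0,l). Let θ_1,…,θ_n, ψ_1,…,ψ_n ∈ (0,l) satisfy ∑ θ_i = ∑ ψ_i = ml with 0 < m < n. Then 2 ∑_{i=1}^n f(θ_i) f′(ψ_i) ≥ ∑_{i=1}^n f(θ_i) f′(θ_i) + ∑_{i=1}^n f(ψ_i) f′(ψ_i), with equality if and only if θ_i = ψ_i for all i. -/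
/-!
For fixed `a`, the function `g y = 2 f(a) f'(y) - f(y) f'(y) + μ y` has derivative
`2 f''(y) (f(a) - f(y))`, thanks to `f'² - f f'' = μ`. As `f` is increasing and `f'' < 0`,
`g` decreases left of `a` and increases right of it, so `g(b) > g(a)` for `b ≠ a`. Summing
`g(ψᵢ) - g(θᵢ)` with `a = θᵢ`, the `μ`-terms cancel because `∑ θᵢ = ∑ ψᵢ`.
-/

open Set

/-- `g(b) - g(a)` for the function `g` attached to `a` above. -/
def defect (f f' : ℝ → ℝ) (μ a b : ℝ) : ℝ :=
  2 * f a * f' b - f a * f' a - f b * f' b - μ * (a - b)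

@[simp]
lemma defect_self (f f' : ℝ → ℝ) (μ a : ℝ) : defect f f' μ a a = 0 := by
  simp only [defect]
  ring

lemma lt_of_hasDerivAt_neg_of_pos {g g' : ℝ → ℝ} {p q a b : ℝ}
    (hg : ∀ x ∈ Ioo p q, HasDerivAt g (g' x) x)
    (hneg : ∀ x ∈ Ioo p a, g' x < 0) (hpos : ∀ x ∈ Ioo a q, 0 < g' x)
    (ha : a ∈ Ioo p q) (hb : b ∈ Ioo p q) (hab : b ≠ a) : g a < g b := by
  have hcont : ContinuousOn g (Ioo p q) :=
    fun x hx => (hg x hx).continuousAt.continuousWithinAt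
  rcases hab.lt_or_gt with hba | hab
  · have hsub : Ioc p a ⊆ Ioo p q := fun x hx => ⟨hx.1, hx.2.trans_lt ha.2⟩
    refine strictAntiOn_of_deriv_neg (convex_Ioc p a) (hcont.mono hsub) (fun x hx => ?_)
      ⟨hb.1, hba.le⟩ ⟨ha.1, le_rfl⟩ hba
    rw [interior_Ioc] at hx
    rw [(hg x (hsub (Ioo_subset_Ioc_self hx))).deriv]
    exact hneg x hx
  · have hsub : Ico a q ⊆ Ioo p q := fun x hx => ⟨ha.1.trans_le hx.1, hx.2⟩
    refine strictMonoOn_of_deriv_pos (convex_Ico a q) (hcont.mono hsub) (fun x hx => ?_)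
      ⟨le_rfl, ha.2⟩ ⟨hab.le, hb.2⟩ hab
    rw [interior_Ico] at hx
    rw [(hg x (hsub (Ioo_subset_Ico_self hx))).deriv]
    exact hpos x hx

section

variable {f f' f'' : ℝ → ℝ} {p q μ a b : ℝ}

lemma defect_pos
    (hderiv : ∀ x ∈ Ioo p q, HasDerivAt f (f' x) x)
    (hderiv2 : ∀ x ∈ Ioo p q, HasDerivAt f' (f'' x) x)
    (hμ : ∀ x ∈ Ioo p q, f' x ^ 2 - f x * f'' x = μ)
    (hf'' : ∀ x ∈ Ioo p q, f'' x < 0) (hf' : ∀ x ∈ Ioo p q, 0 < f' x)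
    (ha : a ∈ Ioo p q) (hb : b ∈ Ioo p q) (hab : a ≠ b) :
    0 < defect f f' μ a b := by
  have hmono : StrictMonoOn f (Ioo p q) :=
    strictMonoOn_of_deriv_pos (convex_Ioo p q)
      (fun x hx => (hderiv x hx).continuousAt.continuousWithinAt)
      (fun x hx => by
        rw [interior_Ioo] at hx
        rw [(hderiv x hx).deriv]
        exact hf' x hx)
  set g : ℝ → ℝ := fun y => 2 * f a * f' y - f y * f' y + μ * y
  have hg : ∀ x ∈ Ioo p q, HasDerivAt g (2 * f'' x * (f a - f x)) x := fun x hx =>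
    ((((hderiv2 x hx).const_mul (2 * f a)).sub ((hderiv x hx).mul (hderiv2 x hx))).add
      ((hasDerivAt_id x).const_mul μ)).congr_deriv
      (by linear_combination (-1 : ℝ) * hμ x hx)
  have hgab : g a < g b := by
    refine lt_of_hasDerivAt_neg_of_pos hg (fun x hx => ?_) (fun x hx => ?_) ha hb hab.symm
    · have hx' : x ∈ Ioo p q := ⟨hx.1, hx.2.trans ha.2⟩
      have : f x < f a := hmono hx' ha hx.2
      nlinarith [hf'' x hx']
    · have hx' : x ∈ Ioo p q := ⟨ha.1.trans hx.1, hx.2⟩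
      have : f a < f x := hmono ha hx' hx.1
      nlinarith [hf'' x hx']
  simp only [g] at hgab
  simp only [defect]
  linarith

lemma defect_nonneg_and_eq_zero_iff
    (hderiv : ∀ x ∈ Ioo p q, HasDerivAt f (f' x) x)
    (hderiv2 : ∀ x ∈ Ioo p q, HasDerivAt f' (f'' x) x)
    (hμ : ∀ x ∈ Ioo p q, f' x ^ 2 - f x * f'' x = μ)
    (hf'' : ∀ x ∈ Ioo p q, f'' x < 0) (hf' : ∀ x ∈ Ioo p q, 0 < f' x)
    (ha : a ∈ Ioo p q) (hb : b ∈ Ioo p q) :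
    0 ≤ defect f f' μ a b ∧ (defect f f' μ a b = 0 ↔ a = b) := by
  rcases eq_or_ne a b with rfl | hab
  · simp
  · have := defect_pos hderiv hderiv2 hμ hf'' hf' ha hb hab
    exact ⟨this.le, iff_of_false this.ne' hab⟩

end

lemma sum_defect {ι : Type*} (s : Finset ι) (f f' : ℝ → ℝ) (μ : ℝ) (θ ψ : ι → ℝ)
    (hsum : ∑ i ∈ s, θ i = ∑ i ∈ s, ψ i) :
    ∑ i ∈ s, defect f f' μ (θ i) (ψ i)
      = 2 * ∑ i ∈ s, f (θ i) * f' (ψ i) - ∑ i ∈ s, f (θ i) * f' (θ i)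
        - ∑ i ∈ s, f (ψ i) * f' (ψ i) := by
  have hμ : ∑ i ∈ s, μ * (θ i - ψ i) = 0 := by
    rw [← Finset.mul_sum, Finset.sum_sub_distrib, hsum, sub_self, mul_zero]
  simp only [defect, Finset.sum_sub_distrib, hμ, Finset.mul_sum, mul_assoc, sub_zero]

theorem stmt13_general (n : ℕ) (l m μ : ℝ)
    (f f' f'' : ℝ → ℝ)
    (hderiv : ∀ x ∈ Set.Ioo (0:ℝ) l, HasDerivAt f (f' x) x)
    (hderiv2 : ∀ x ∈ Set.Ioo (0:ℝ) l, HasDerivAt f' (f'' x) x)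
    (hμ : ∀ x ∈ Set.Ioo (0:ℝ) l, (f' x) ^ 2 - f x * f'' x = μ)
    (hf'' : ∀ x ∈ Set.Ioo (0:ℝ) l, f'' x < 0)
    (hf' : ∀ x ∈ Set.Ioo (0:ℝ) l, 0 < f' x)
    (θ ψ : Fin n → ℝ)
    (hθ : ∀ i, θ i ∈ Set.Ioo (0:ℝ) l) (hψ : ∀ i, ψ i ∈ Set.Ioo (0:ℝ) l)
    (hsumθ : ∑ i, θ i = m * l) (hsumψ : ∑ i, ψ i = m * l) :
    (∑ i, f (θ i) * f' (θ i)) + (∑ i, f (ψ i) * f' (ψ i))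
      ≤ 2 * ∑ i, f (θ i) * f' (ψ i)
    ∧ (2 * ∑ i, f (θ i) * f' (ψ i)
        = (∑ i, f (θ i) * f' (θ i)) + (∑ i, f (ψ i) * f' (ψ i))
      ↔ ∀ i, θ i = ψ i) := by
  have hD i := defect_nonneg_and_eq_zero_iff hderiv hderiv2 hμ hf'' hf' (hθ i) (hψ i)
  have hsum := sum_defect Finset.univ f f' μ θ ψ (hsumθ.trans hsumψ.symm)
  have hnonneg : 0 ≤ ∑ i, defect f f' μ (θ i) (ψ i) :=
    Finset.sum_nonneg fun i _ => (hD i).1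
  have hzero : ∑ i, defect f f' μ (θ i) (ψ i) = 0 ↔ ∀ i, θ i = ψ i := by
    simp only [Finset.sum_eq_zero_iff_of_nonneg fun i _ => (hD i).1, Finset.mem_univ,
      true_imp_iff, (hD _).2]
  refine ⟨by linarith, ?_⟩
  rw [← hzero, hsum]
  constructor <;> intro h <;> linarith

theorem stmt13 (n : ℕ) (hn : 2 ≤ n) (l m μ : ℝ) (hl : 0 < l) (hm0 : 0 < m) (hmn : m < n)
    (f f' f'' : ℝ → ℝ)
    (hderiv : ∀ x ∈ Set.Ioo (0:ℝ) l, HasDerivAt f (f' x) x)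
    (hderiv2 : ∀ x ∈ Set.Ioo (0:ℝ) l, HasDerivAt f' (f'' x) x)
    (hcont : ContinuousOn f'' (Set.Ioo (0:ℝ) l))
    (hpos : ∀ x ∈ Set.Ioo (0:ℝ) l, 0 < f x)
    (hne : ∀ x ∈ Set.Ioo (0:ℝ) l, f' x * f'' x ≠ 0)
    (hμ : ∀ x ∈ Set.Ioo (0:ℝ) l, (f' x) ^ 2 - f x * f'' x = μ)
    (hf'' : ∀ x ∈ Set.Ioo (0:ℝ) l, f'' x < 0)
    (hf' : ∀ x ∈ Set.Ioo (0:ℝ) l, 0 < f' x)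
    (θ ψ : Fin n → ℝ)
    (hθ : ∀ i, θ i ∈ Set.Ioo (0:ℝ) l) (hψ : ∀ i, ψ i ∈ Set.Ioo (0:ℝ) l)
    (hsumθ : ∑ i, θ i = m * l) (hsumψ : ∑ i, ψ i = m * l) :
    (∑ i, f (θ i) * f' (θ i)) + (∑ i, f (ψ i) * f' (ψ i))
      ≤ 2 * ∑ i, f (θ i) * f' (ψ i)
    ∧ (2 * ∑ i, f (θ i) * f' (ψ i)
        = (∑ i, f (θ i) * f' (θ i)) + (∑ i, f (ψ i) * f' (ψ i))
      ↔ ∀ i, θ i = ψ i) :=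
  stmt13_general n l m μ f f' f'' hderiv hderiv2 hμ hf'' hf' θ ψ hθ hψ hsumθ hsumψ
end

section
/- Let f be a positive C² function on (0,l) with f′(θ)f″(θ) ≠ 0 satisfying (f′)² − f f″ = μ constant, with f″ > 0 and f′ > 0 on (0,l). Let θ_1,…,θ_n, ψ_1,…,ψ_n ∈ (0,l) with ∑ θ_i = ∑ ψ_i = ml, 0 < m < n. Then 2 ∑_{i=1}^n f(θ_i) f′(ψ_i) ≤ ∑_{i=1}^n f(θ_i) f′(θ_i) + ∑_{i=1}^n f(ψ_i) f′(ψ_i), with equality if and only if θ_i = ψ_i for all i. -/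
theorem stmt14 (n : ℕ) (hn : 2 ≤ n) (l m μ : ℝ) (hl : 0 < l) (hm0 : 0 < m) (hmn : m < n)
    (f f' f'' : ℝ → ℝ)
    (hderiv : ∀ x ∈ Set.Ioo (0:ℝ) l, HasDerivAt f (f' x) x)
    (hderiv2 : ∀ x ∈ Set.Ioo (0:ℝ) l, HasDerivAt f' (f'' x) x)
    (hcont : ContinuousOn f'' (Set.Ioo (0:ℝ) l))
    (hpos : ∀ x ∈ Set.Ioo (0:ℝ) l, 0 < f x)
    (hne : ∀ x ∈ Set.Ioo (0:ℝ) l, f' x * f'' x ≠ 0)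
    (hμ : ∀ x ∈ Set.Ioo (0:ℝ) l, (f' x) ^ 2 - f x * f'' x = μ)
    (hf'' : ∀ x ∈ Set.Ioo (0:ℝ) l, 0 < f'' x)
    (hf' : ∀ x ∈ Set.Ioo (0:ℝ) l, 0 < f' x)
    (θ ψ : Fin n → ℝ)
    (hθ : ∀ i, θ i ∈ Set.Ioo (0:ℝ) l) (hψ : ∀ i, ψ i ∈ Set.Ioo (0:ℝ) l)
    (hsumθ : ∑ i, θ i = m * l) (hsumψ : ∑ i, ψ i = m * l) :
    2 * ∑ i, f (θ i) * f' (ψ i)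
      ≤ (∑ i, f (θ i) * f' (θ i)) + (∑ i, f (ψ i) * f' (ψ i))
    ∧ (2 * ∑ i, f (θ i) * f' (ψ i)
        = (∑ i, f (θ i) * f' (θ i)) + (∑ i, f (ψ i) * f' (ψ i))
      ↔ ∀ i, θ i = ψ i) := by
  have hcf' : ContinuousOn f' (Set.Ioo (0:ℝ) l) := fun x hx =>
    ((hderiv2 x hx).continuousAt).continuousWithinAt
  have hmono : StrictMonoOn f' (Set.Ioo (0:ℝ) l) := by
    apply strictMonoOn_of_deriv_pos (convex_Ioo _ _) hcf'
    intro x hx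
    rw [interior_Ioo] at hx
    rw [(hderiv2 x hx).deriv]
    exact hf'' x hx
  have key : ∀ a ∈ Set.Ioo (0:ℝ) l, ∀ b ∈ Set.Ioo (0:ℝ) l,
      0 ≤ f a * f' a + f b * f' b + μ * (a - b) - 2 * (f a * f' b) ∧
      (f a * f' a + f b * f' b + μ * (a - b) - 2 * (f a * f' b) = 0 ↔ a = b) := by
    intro a ha b hb
    set g : ℝ → ℝ := fun x => f x * f' x - 2 * f x * f' b + μ * (x - b) with hgdef
    have hg : ∀ x ∈ Set.Ioo (0:ℝ) l, HasDerivAt g (2 * f' x * (f' x - f' b)) x := by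
      intro x hx
      have h1 : HasDerivAt (fun x => f x * f' x - 2 * f x * f' b + μ * (x - b))
          (f' x * f' x + f x * f'' x - f' x * (2 * f' b) + μ * 1) x := by
        exact (((hderiv x hx).mul (hderiv2 x hx)).sub
          (by simpa [mul_comm, mul_assoc, mul_left_comm] using
            (hderiv x hx).const_mul (2 * f' b))).add
          (((hasDerivAt_id x).sub_const b).const_mul μ)
      have hfx : f x * f'' x = f' x ^ 2 - μ := by
        have := hμ x hx; linarith
      convert h1 using 1
      rw [hfx]; ring
    have hgab : g a - g b = f a * f' a + f b * f' b + μ * (a - b) - 2 * (f a * f' b) := by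
      simp only [hgdef]; ring
    rcases lt_trichotomy a b with hab | hab | hab
    · have hsub : Set.Icc a b ⊆ Set.Ioo (0:ℝ) l := fun x hx =>
        ⟨lt_of_lt_of_le ha.1 hx.1, lt_of_le_of_lt hx.2 hb.2⟩
      have hanti : StrictAntiOn g (Set.Icc a b) := by
        apply strictAntiOn_of_deriv_neg (convex_Icc _ _)
          (fun x hx => ((hg x (hsub hx)).continuousAt).continuousWithinAt)
        intro x hx
        rw [interior_Icc] at hx
        have hx' : x ∈ Set.Ioo (0:ℝ) l := hsub ⟨le_of_lt hx.1, le_of_lt hx.2⟩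
        rw [(hg x hx').deriv]
        have h1 : 0 < f' x := hf' x hx'
        have h2 : f' x < f' b := hmono hx' hb hx.2
        nlinarith
      have hlt : g b < g a := hanti (Set.left_mem_Icc.2 hab.le) (Set.right_mem_Icc.2 hab.le) hab
      constructor
      · linarith
      · constructor
        · intro h; exfalso; linarith
        · intro h; exact absurd h hab.ne
    · subst hab
      constructor
      · nlinarith [hμ a ha]
      · constructor <;> intro _ <;> [rfl; ring]
    · have hsub : Set.Icc b a ⊆ Set.Ioo (0:ℝ) l := fun x hx =>
        ⟨lt_of_lt_of_le hb.1 hx.1, lt_of_le_of_lt hx.2 ha.2⟩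
      have hmonog : StrictMonoOn g (Set.Icc b a) := by
        apply strictMonoOn_of_deriv_pos (convex_Icc _ _)
          (fun x hx => ((hg x (hsub hx)).continuousAt).continuousWithinAt)
        intro x hx
        rw [interior_Icc] at hx
        have hx' : x ∈ Set.Ioo (0:ℝ) l := hsub ⟨le_of_lt hx.1, le_of_lt hx.2⟩
        rw [(hg x hx').deriv]
        have h1 : 0 < f' x := hf' x hx'
        have h2 : f' b < f' x := hmono hb hx' hx.1
        nlinarith
      have hlt : g b < g a := hmonog (Set.left_mem_Icc.2 hab.le) (Set.right_mem_Icc.2 hab.le) hab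
      constructor
      · linarith
      · constructor
        · intro h; exfalso; linarith
        · intro h; exact absurd h hab.ne'
  set T : Fin n → ℝ := fun i =>
    f (θ i) * f' (θ i) + f (ψ i) * f' (ψ i) + μ * (θ i - ψ i) - 2 * (f (θ i) * f' (ψ i)) with hTdef
  have hT0 : ∀ i, 0 ≤ T i := fun i => (key (θ i) (hθ i) (ψ i) (hψ i)).1
  have hTeq : ∀ i, T i = 0 ↔ θ i = ψ i := fun i => (key (θ i) (hθ i) (ψ i) (hψ i)).2
  have hsumT : ∑ i, T i = (∑ i, f (θ i) * f' (θ i)) + (∑ i, f (ψ i) * f' (ψ i))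
      - 2 * ∑ i, f (θ i) * f' (ψ i) := by
    have e1 : ∑ i, T i = ∑ i, ((f (θ i) * f' (θ i) + f (ψ i) * f' (ψ i))
        + (μ * θ i - μ * ψ i) - 2 * (f (θ i) * f' (ψ i))) :=
      Finset.sum_congr rfl fun i _ => by simp only [hTdef]; ring
    rw [e1, Finset.sum_sub_distrib, Finset.sum_add_distrib, Finset.sum_add_distrib,
      Finset.sum_sub_distrib, ← Finset.mul_sum, ← Finset.mul_sum,
      ← Finset.mul_sum, hsumθ, hsumψ]
    ring
  have hsnn : 0 ≤ ∑ i, T i := Finset.sum_nonneg fun i _ => hT0 i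
  constructor
  · linarith
  · constructor
    · intro h
      have hz : ∑ i, T i = 0 := by linarith
      intro i
      exact (hTeq i).1 ((Finset.sum_eq_zero_iff_of_nonneg fun j _ => hT0 j).1 hz i (Finset.mem_univ i))
    · intro h
      have hz : ∀ i, T i = 0 := fun i => (hTeq i).2 (h i)
      have : ∑ i, T i = 0 := Finset.sum_eq_zero fun i _ => hz i
      linarith
end

section
/- Let θ_1,…,θ_n ∈ (0,π/2) with ∑_{i=1}^n θ_i = π and set σ = π/n. Then 2 cos σ ∑_{i=1}^n sin θ_i ≥ ∑_{i=1}^n sin θ_i cos θ_i + n sin σ cos σ · cos σ / cos σ, i.e., 2 cos σ ∑_{i=1}^n sin θ_i ≥ ∑_{i=1}^n sin θ_i cos θ_i + n tan σ (cos σ)², with equality if and only if θ_1 = ⋯ = θ_n = σ. -/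
/-!
Put `σ = π / n` and `L x = 2 cos σ sin x - sin x cos x - x`. Since
`L' x = 2 cos x (cos σ - cos x)`, on `[0, π/2]` the function `L` strictly decreases up to `σ` and
strictly increases after it, so `σ` is its unique minimiser there. Summing `L (θ i) ≥ L σ` and using
`∑ θ i = π = n σ` gives the inequality, with equality only when every `θ i = σ`.
-/

open Real Set Finset

/-- The subtracted `x` is the constraint `∑ θ i = π` with Lagrange multiplier `1`, the value of
`d/dx (2 cos σ sin x - sin x cos x)` at `x = σ`. -/
noncomputable def lagrangian (c x : ℝ) : ℝ := 2 * c * sin x - sin x * cos x - x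

lemma hasDerivAt_lagrangian (c x : ℝ) :
    HasDerivAt (lagrangian c) (2 * cos x * (c - cos x)) x := by
  have h := ((((hasDerivAt_sin x).const_mul (2 * c)).sub
    ((hasDerivAt_sin x).mul (hasDerivAt_cos x))).sub (hasDerivAt_id x))
  exact h.congr_deriv (by linear_combination sin_sq_add_cos_sq x)

lemma continuous_lagrangian (c : ℝ) : Continuous (lagrangian c) := by
  unfold lagrangian; fun_prop

lemma strictAntiOn_lagrangian {σ : ℝ} (hσ : σ ≤ π / 2) :
    StrictAntiOn (lagrangian (cos σ)) (Icc 0 σ) := by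
  refine strictAntiOn_of_deriv_neg (convex_Icc 0 σ) (continuous_lagrangian _).continuousOn ?_
  intro y hy
  rw [interior_Icc] at hy
  have hcos_pos : 0 < cos y := cos_pos_of_mem_Ioo ⟨by linarith [hy.1, pi_pos], by linarith [hy.2]⟩
  have hcos_lt : cos σ < cos y := cos_lt_cos_of_nonneg_of_le_pi hy.1.le (by linarith [pi_pos]) hy.2
  rw [(hasDerivAt_lagrangian _ y).deriv]
  nlinarith

lemma strictMonoOn_lagrangian {σ : ℝ} (hσ : 0 ≤ σ) :
    StrictMonoOn (lagrangian (cos σ)) (Icc σ (π / 2)) := by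
  refine strictMonoOn_of_deriv_pos (convex_Icc σ _) (continuous_lagrangian _).continuousOn ?_
  intro y hy
  rw [interior_Icc] at hy
  have hcos_pos : 0 < cos y := cos_pos_of_mem_Ioo ⟨by linarith [hy.1, pi_pos], hy.2⟩
  have hcos_lt : cos y < cos σ := cos_lt_cos_of_nonneg_of_le_pi hσ (by linarith [hy.2, pi_pos]) hy.1
  rw [(hasDerivAt_lagrangian _ y).deriv]
  nlinarith

lemma lagrangian_cos_lt {σ x : ℝ} (hσ : σ ∈ Icc 0 (π / 2)) (hx : x ∈ Icc 0 (π / 2))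
    (hne : x ≠ σ) : lagrangian (cos σ) σ < lagrangian (cos σ) x := by
  rcases hne.lt_or_gt with hlt | hgt
  · exact strictAntiOn_lagrangian hσ.2 ⟨hx.1, hlt.le⟩ ⟨hσ.1, le_rfl⟩ hlt
  · exact strictMonoOn_lagrangian hσ.1 ⟨le_rfl, hσ.2⟩ ⟨hgt.le, hx.2⟩ hgt

lemma card_mul_le_sum_and_eq_iff {ι α : Type*} [Fintype ι] {f : α → ℝ} {a : α} {θ : ι → α}
    (hmin : ∀ i, θ i ≠ a → f a < f (θ i)) :
    Fintype.card ι * f a ≤ ∑ i, f (θ i) ∧ (∑ i, f (θ i) = Fintype.card ι * f a ↔ ∀ i, θ i = a) := by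
  have hle : ∀ i ∈ Finset.univ, f a ≤ f (θ i) := fun i _ => by
    by_cases h : θ i = a
    · rw [h]
    · exact (hmin i h).le
  have hconst : ∑ _i : ι, f a = Fintype.card ι * f a := by simp
  refine ⟨hconst ▸ sum_le_sum hle, ⟨fun heq i => ?_, fun hall => by simp [hall]⟩⟩
  rw [← hconst] at heq
  have := (sum_eq_sum_iff_of_le hle).mp heq.symm i (Finset.mem_univ i)
  by_contra h
  exact (hmin i h).ne this

lemma tan_mul_cos_sq (x : ℝ) : tan x * cos x ^ 2 = sin x * cos x := by
  by_cases h : cos x = 0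
  · simp [h]
  · rw [tan_eq_sin_div_cos]; field_simp

open Real in
theorem stmt15 (n : ℕ) (hn : 3 ≤ n)
    (θ : Fin n → ℝ) (hθ : ∀ i, θ i ∈ Set.Ioo (0:ℝ) (π / 2))
    (hsum : ∑ i, θ i = π) :
    (∑ i, sin (θ i) * cos (θ i)) + (n : ℝ) * tan (π / n) * (cos (π / n)) ^ 2
      ≤ 2 * cos (π / n) * ∑ i, sin (θ i)
    ∧ (2 * cos (π / n) * ∑ i, sin (θ i)
        = (∑ i, sin (θ i) * cos (θ i)) + (n : ℝ) * tan (π / n) * (cos (π / n)) ^ 2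
      ↔ ∀ i, θ i = π / n) := by
  have hn3 : (3 : ℝ) ≤ n := by exact_mod_cast hn
  have hσ : π / n ∈ Icc 0 (π / 2) :=
    ⟨by positivity, div_le_div_of_nonneg_left pi_pos.le two_pos (by linarith)⟩
  have hsumL : ∑ i, lagrangian (cos (π / n)) (θ i)
      = 2 * cos (π / n) * ∑ i, sin (θ i) - ∑ i, sin (θ i) * cos (θ i) - π := by
    simp only [lagrangian, sum_sub_distrib, mul_sum, hsum]
  have hminL : n * lagrangian (cos (π / n)) (π / n) = n * tan (π / n) * cos (π / n) ^ 2 - π := by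
    rw [mul_assoc, tan_mul_cos_sq, lagrangian]
    field_simp
    ring
  obtain ⟨hle, heq⟩ := card_mul_le_sum_and_eq_iff (f := lagrangian (cos (π / n)))
    fun i hi => lagrangian_cos_lt hσ (Ioo_subset_Icc_self (hθ i)) hi
  rw [Fintype.card_fin, hminL, hsumL] at hle heq
  refine ⟨by linarith, ?_⟩
  rw [← heq]
  constructor <;> intro h <;> linarith
end

section
/- Let Λ_n be a convex n-gon inscribed in a circle of radius R, with half central angles θ_1,…,θ_n ∈ (0,π/2) summing to π, so that its perimeter is L_n = 2R ∑ sin θ_i and its area is A_n = R² ∑ sin θ_i cos θ_i. Let σ = π/n and d_n = n tan(π/n). Then A_n − L_n R cos σ + d_n (R cos σ)² ≤ 0, with equality if and only if θ_1 = ⋯ = θ_n = σ. -/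
open Real

lemma stmt16_key {σ : ℝ} (hσ0 : 0 < σ) (hσ2 : σ < π / 2) {θ : ℝ}
    (hθ0 : 0 < θ) (hθ2 : θ < π / 2) :
    sin θ * cos θ - 2 * cos σ * sin θ + sin σ * cos σ + (θ - σ) ≤ 0 ∧
    (sin θ * cos θ - 2 * cos σ * sin θ + sin σ * cos σ + (θ - σ) = 0 ↔ θ = σ) := by
  set g : ℝ → ℝ := fun t => sin t * cos t - 2 * cos σ * sin t + t with hg
  have hderiv : ∀ t, HasDerivAt g (2 * cos t * (cos t - cos σ)) t := by
    intro t
    have h1 : HasDerivAt g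
        (cos t * cos t + sin t * (-sin t) - 2 * cos σ * cos t + 1) t := by
      exact (((Real.hasDerivAt_sin t).mul (Real.hasDerivAt_cos t)).sub
        ((Real.hasDerivAt_sin t).const_mul (2 * cos σ))).add (hasDerivAt_id' t)
    convert h1 using 1
    linear_combination Real.sin_sq_add_cos_sq t
  have hcont : Continuous g := by fun_prop
  have hmono : StrictMonoOn g (Set.Icc 0 σ) := by
    apply strictMonoOn_of_deriv_pos (convex_Icc 0 σ) hcont.continuousOn
    intro t ht
    rw [interior_Icc] at ht
    rw [(hderiv t).deriv]
    have hct : 0 < cos t := Real.cos_pos_of_mem_Ioo ⟨by linarith [ht.1, pi_pos], by linarith [ht.2]⟩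
    have hlt : cos σ < cos t :=
      Real.cos_lt_cos_of_nonneg_of_le_pi ht.1.le (by linarith [pi_pos]) ht.2
    nlinarith
  have hanti : StrictAntiOn g (Set.Icc σ (π / 2)) := by
    apply strictAntiOn_of_deriv_neg (convex_Icc σ (π / 2)) hcont.continuousOn
    intro t ht
    rw [interior_Icc] at ht
    rw [(hderiv t).deriv]
    have hct : 0 < cos t := Real.cos_pos_of_mem_Ioo ⟨by linarith [ht.1, pi_pos], ht.2⟩
    have hlt : cos t < cos σ :=
      Real.cos_lt_cos_of_nonneg_of_le_pi hσ0.le (by linarith [ht.2, pi_pos]) ht.1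
    nlinarith
  have hval : sin θ * cos θ - 2 * cos σ * sin θ + sin σ * cos σ + (θ - σ)
      = g θ - g σ := by simp only [hg]; ring
  have hlt : θ ≠ σ → g θ < g σ := by
    intro hne
    rcases lt_or_gt_of_ne hne with h | h
    · exact hmono ⟨hθ0.le, h.le⟩ ⟨hσ0.le, le_refl σ⟩ h
    · exact hanti ⟨le_refl σ, hσ2.le⟩ ⟨h.le, hθ2.le⟩ h
  constructor
  · rw [hval]
    rcases eq_or_ne θ σ with rfl | hne
    · simp
    · linarith [hlt hne]
  · rw [hval]
    constructor
    · intro h0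
      by_contra hne
      linarith [hlt hne]
    · rintro rfl; simp

open Real in
theorem stmt16 (n : ℕ) (hn : 3 ≤ n) (R : ℝ) (hR : 0 < R)
    (θ : Fin n → ℝ) (hθ : ∀ i, θ i ∈ Set.Ioo (0:ℝ) (π / 2))
    (hsum : ∑ i, θ i = π)
    (L A d : ℝ)
    (hL : L = 2 * R * ∑ i, sin (θ i))
    (hA : A = R ^ 2 * ∑ i, sin (θ i) * cos (θ i))
    (hd : d = (n : ℝ) * tan (π / n)) :
    A - L * R * cos (π / n) + d * (R * cos (π / n)) ^ 2 ≤ 0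
    ∧ (A - L * R * cos (π / n) + d * (R * cos (π / n)) ^ 2 = 0
      ↔ ∀ i, θ i = π / n) := by
  have hn3 : (3:ℝ) ≤ (n:ℝ) := by exact_mod_cast hn
  have hnpos : (0:ℝ) < (n:ℝ) := by linarith
  have hσ0 : 0 < π / n := div_pos pi_pos hnpos
  have hσ2 : π / n < π / 2 :=
    div_lt_div_of_pos_left pi_pos (by norm_num) (by linarith)
  have hcos : 0 < cos (π / n) :=
    Real.cos_pos_of_mem_Ioo ⟨by linarith [pi_pos], hσ2⟩
  set f : Fin n → ℝ := fun i =>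
    sin (θ i) * cos (θ i) - 2 * cos (π / n) * sin (θ i)
      + sin (π / n) * cos (π / n) + (θ i - π / n) with hf
  have hkey : ∀ i, f i ≤ 0 ∧ (f i = 0 ↔ θ i = π / n) := fun i =>
    stmt16_key hσ0 hσ2 (hθ i).1 (hθ i).2
  have hnπ : (n:ℝ) * (π / n) = π := by field_simp
  have hEk : A - L * R * cos (π / n) + d * (R * cos (π / n)) ^ 2
      = R ^ 2 * ∑ i, f i := by
    have hsum2 : ∑ i, f i = (∑ i, sin (θ i) * cos (θ i))
        - 2 * cos (π / n) * (∑ i, sin (θ i))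
        + (n:ℝ) * (sin (π / n) * cos (π / n))
        + ((∑ i, θ i) - (n:ℝ) * (π / n)) := by
      simp only [hf, Finset.sum_add_distrib, Finset.sum_sub_distrib,
        Finset.mul_sum, Finset.sum_const, Finset.card_univ, Fintype.card_fin,
        nsmul_eq_mul]
    rw [hsum2, hsum, hnπ, hA, hL, hd, Real.tan_eq_sin_div_cos]
    field_simp
    ring
  have hS : ∑ i, f i ≤ 0 :=
    Finset.sum_nonpos (fun i _ => (hkey i).1)
  constructor
  · rw [hEk]
    nlinarith [sq_nonneg R]
  · rw [hEk]
    have hR2 : (R:ℝ) ^ 2 ≠ 0 := by positivity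
    have h1 : R ^ 2 * ∑ i, f i = 0 ↔ ∑ i, f i = 0 := by
      constructor
      · intro h
        rcases mul_eq_zero.mp h with h | h
        · exact absurd h hR2
        · exact h
      · intro h; rw [h, mul_zero]
    rw [h1, Finset.sum_eq_zero_iff_of_nonpos (fun i _ => (hkey i).1)]
    constructor
    · intro h i
      exact (hkey i).2.mp (h i (Finset.mem_univ i))
    · intro h i _
      exact (hkey i).2.mpr (h i)
end

section
/- Let Λ_n be a convex n-gon inscribed in a circle of radius R, with half central angles θ_1,…,θ_n ∈ (0,π/2) summing to π, perimeter L_n = 2R ∑ sin θ_i and area A_n = R² ∑ sin θ_i cos θ_i. Let A_n* = nR² sin(π/n) cos(π/n) be the area of the regular inscribed n-gon and d_n = n tan(π/n). Then L_n² − 4 d_n A_n ≥ (1/R²) (A_n* − A_n)², with equality if and only if Λ_n is regular (θ_1 = ⋯ = θ_n = π/n). -/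
/-!
Put `α = π / n`, `S = ∑ sin θᵢ` and `q = ∑ sin θᵢ cos θᵢ`, so that `L = 2RS`, `A = R²q` and
`A* = R² n sin α cos α`. On `[0, π/2]` the function `y ↦ 2 cos α sin y - sin y cos y - y` has
derivative `2 cos y (cos α - cos y)`, hence a strict minimum at `y = α`. Summing over the `θᵢ`
(whose sum is `nα`) gives `q + n sin α cos α ≤ 2 cos α S`, with equality only for the regular
polygon. The theorem then follows from the identity
`cos² α (4S² - 4n tan α q - (n sin α cos α - q)²)
  = (2 cos α S - q - n sin α cos α)(2 cos α S + q + n sin α cos α) + (sin α (q - n sin α cos α))²`,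
whose right-hand side is then a sum of nonnegative terms.
-/

open Real Set Finset

namespace InscribedPolygon

theorem pi_div_natCast_mem_Ioo {n : ℕ} (hn : 2 < n) : π / n ∈ Ioo 0 (π / 2) := by
  have hn' : (2 : ℝ) < n := by exact_mod_cast hn
  exact ⟨div_pos pi_pos (by linarith), div_lt_div_of_pos_left pi_pos two_pos hn'⟩

theorem sin_mul_cos_nonneg {y : ℝ} (hy : y ∈ Icc 0 (π / 2)) : 0 ≤ sin y * cos y :=
  mul_nonneg (sin_nonneg_of_nonneg_of_le_pi hy.1 (by linarith [hy.2, pi_pos]))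
    (cos_nonneg_of_mem_Icc ⟨by linarith [hy.1, pi_pos], hy.2⟩)

/-- The constraint `∑ θᵢ = π` enters through the Lagrange term `-y`. -/
noncomputable def lagrangian (α y : ℝ) : ℝ := 2 * cos α * sin y - sin y * cos y - y

theorem hasDerivAt_lagrangian (α y : ℝ) :
    HasDerivAt (lagrangian α) (2 * cos y * (cos α - cos y)) y := by
  have h := (((hasDerivAt_sin y).const_mul (2 * cos α)).sub
    ((hasDerivAt_sin y).mul (hasDerivAt_cos y))).sub (hasDerivAt_id y)
  refine h.congr_deriv ?_
  linear_combination sin_sq_add_cos_sq y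

theorem continuous_lagrangian (α : ℝ) : Continuous (lagrangian α) := by
  unfold lagrangian; fun_prop

theorem strictAntiOn_lagrangian {α : ℝ} (hα : α ≤ π / 2) :
    StrictAntiOn (lagrangian α) (Icc 0 α) := by
  refine strictAntiOn_of_deriv_neg (convex_Icc _ _) (continuous_lagrangian α).continuousOn ?_
  intro x hx
  rw [interior_Icc] at hx
  rw [(hasDerivAt_lagrangian α x).deriv]
  have hcos : 0 < cos x := cos_pos_of_mem_Ioo ⟨by linarith [hx.1, pi_pos], by linarith [hx.2]⟩
  have hlt : cos α < cos x := cos_lt_cos_of_nonneg_of_le_pi hx.1.le (by linarith [pi_pos]) hx.2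
  nlinarith

theorem strictMonoOn_lagrangian {α : ℝ} (hα : 0 ≤ α) :
    StrictMonoOn (lagrangian α) (Icc α (π / 2)) := by
  refine strictMonoOn_of_deriv_pos (convex_Icc _ _) (continuous_lagrangian α).continuousOn ?_
  intro x hx
  rw [interior_Icc] at hx
  rw [(hasDerivAt_lagrangian α x).deriv]
  have hcos : 0 < cos x := cos_pos_of_mem_Ioo ⟨by linarith [hx.1, pi_pos], hx.2⟩
  have hlt : cos x < cos α := cos_lt_cos_of_nonneg_of_le_pi hα (by linarith [hx.2, pi_pos]) hx.1
  nlinarith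

theorem lagrangian_lt_of_ne {α y : ℝ} (hα : α ∈ Icc 0 (π / 2)) (hy : y ∈ Icc 0 (π / 2))
    (hne : y ≠ α) : lagrangian α α < lagrangian α y := by
  rcases hne.lt_or_gt with h | h
  · exact strictAntiOn_lagrangian hα.2 ⟨hy.1, h.le⟩ ⟨hα.1, le_rfl⟩ h
  · exact strictMonoOn_lagrangian hα.1 ⟨le_rfl, hα.2⟩ ⟨h.le, hy.2⟩ h

theorem lagrangian_le {α y : ℝ} (hα : α ∈ Icc 0 (π / 2)) (hy : y ∈ Icc 0 (π / 2)) :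
    lagrangian α α ≤ lagrangian α y := by
  rcases eq_or_ne y α with rfl | hne
  · exact le_rfl
  · exact (lagrangian_lt_of_ne hα hy hne).le

section Sum

variable {ι : Type*} [Fintype ι] {θ : ι → ℝ} {α : ℝ}

theorem sum_lagrangian_sub (hsum : ∑ i, θ i = Fintype.card ι * α) :
    ∑ i, (lagrangian α (θ i) - lagrangian α α)
      = 2 * cos α * ∑ i, sin (θ i) - ∑ i, sin (θ i) * cos (θ i)
        - Fintype.card ι * (sin α * cos α) := by
  simp only [lagrangian, Finset.sum_sub_distrib, ← Finset.mul_sum, hsum, Finset.sum_const,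
    Finset.card_univ, nsmul_eq_mul]
  ring

theorem card_mul_sin_mul_cos_add_sum_le (hθ : ∀ i, θ i ∈ Icc 0 (π / 2))
    (hα : α ∈ Icc 0 (π / 2)) (hsum : ∑ i, θ i = Fintype.card ι * α) :
    Fintype.card ι * (sin α * cos α) + ∑ i, sin (θ i) * cos (θ i)
      ≤ 2 * cos α * ∑ i, sin (θ i) := by
  have := Finset.sum_nonneg fun i (_ : i ∈ Finset.univ) => sub_nonneg.2 (lagrangian_le hα (hθ i))
  rw [sum_lagrangian_sub hsum] at this
  linarith

theorem card_mul_sin_mul_cos_add_sum_eq_iff (hθ : ∀ i, θ i ∈ Icc 0 (π / 2))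
    (hα : α ∈ Icc 0 (π / 2)) (hsum : ∑ i, θ i = Fintype.card ι * α) :
    Fintype.card ι * (sin α * cos α) + ∑ i, sin (θ i) * cos (θ i)
      = 2 * cos α * ∑ i, sin (θ i) ↔ ∀ i, θ i = α := by
  have hzero := Finset.sum_eq_zero_iff_of_nonneg
    fun i (_ : i ∈ Finset.univ) => sub_nonneg.2 (lagrangian_le hα (hθ i))
  rw [sum_lagrangian_sub hsum] at hzero
  constructor
  · intro h i
    by_contra hne
    have := (hzero.1 (by linarith)) i (mem_univ i)
    linarith [lagrangian_lt_of_ne hα (hθ i) hne]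
  · intro h
    have := hzero.2 fun i _ => by rw [h i, sub_self]
    linarith

end Sum

theorem cos_sq_mul_defect (α n S q : ℝ) :
    cos α ^ 2 * (4 * S ^ 2 - 4 * n * tan α * q - (n * sin α * cos α - q) ^ 2)
      = (2 * cos α * S - q - n * (sin α * cos α)) * (2 * cos α * S + q + n * (sin α * cos α))
        + (sin α * (q - n * sin α * cos α)) ^ 2 := by
  rcases eq_or_ne (cos α) 0 with hcos | hcos
  · have := sin_sq_add_cos_sq α
    rw [hcos] at this ⊢
    linear_combination -q ^ 2 * this
  · linear_combination (-4 * n * q * cos α) * tan_mul_cos hcos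
      + (-(q - n * sin α * cos α) ^ 2) * sin_sq_add_cos_sq α

theorem four_sq_sub_eq_of_regular {α : ℝ} (hcos : cos α ≠ 0) (n : ℝ) :
    4 * (n * sin α) ^ 2 - 4 * n * tan α * (n * (sin α * cos α))
      = (n * sin α * cos α - n * (sin α * cos α)) ^ 2 := by
  linear_combination (-4 * n ^ 2 * sin α) * tan_mul_cos hcos

variable {α n S q : ℝ}

theorem sq_sub_le_of_le_two_cos_mul (hcos : 0 < cos α) (hpos : 0 ≤ n * (sin α * cos α) + q)
    (hkey : n * (sin α * cos α) + q ≤ 2 * cos α * S) :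
    (n * sin α * cos α - q) ^ 2 ≤ 4 * S ^ 2 - 4 * n * tan α * q := by
  have hid := cos_sq_mul_defect α n S q
  have hprod : 0 ≤ (2 * cos α * S - q - n * (sin α * cos α))
      * (2 * cos α * S + q + n * (sin α * cos α)) := mul_nonneg (by linarith) (by linarith)
  have : 0 ≤ 4 * S ^ 2 - 4 * n * tan α * q - (n * sin α * cos α - q) ^ 2 := by
    refine (mul_nonneg_iff_of_pos_left (pow_pos hcos 2)).1 ?_
    rw [hid]; positivity
  linarith

theorem two_cos_mul_eq_of_sq_sub_eq (hpos : 0 < n * (sin α * cos α) + q)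
    (hkey : n * (sin α * cos α) + q ≤ 2 * cos α * S)
    (heq : 4 * S ^ 2 - 4 * n * tan α * q = (n * sin α * cos α - q) ^ 2) :
    n * (sin α * cos α) + q = 2 * cos α * S := by
  have hid := cos_sq_mul_defect α n S q
  rw [heq, sub_self, mul_zero] at hid
  nlinarith [sq_nonneg (sin α * (q - n * sin α * cos α))]

end InscribedPolygon

open InscribedPolygon

open Real in
theorem stmt17 (n : ℕ) (hn : 3 ≤ n) (R : ℝ) (hR : 0 < R)
    (θ : Fin n → ℝ) (hθ : ∀ i, θ i ∈ Set.Ioo (0:ℝ) (π / 2))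
    (hsum : ∑ i, θ i = π)
    (L A Astar d : ℝ)
    (hL : L = 2 * R * ∑ i, sin (θ i))
    (hA : A = R ^ 2 * ∑ i, sin (θ i) * cos (θ i))
    (hAstar : Astar = (n : ℝ) * R ^ 2 * sin (π / n) * cos (π / n))
    (hd : d = (n : ℝ) * tan (π / n)) :
    (1 / R ^ 2) * (Astar - A) ^ 2 ≤ L ^ 2 - 4 * d * A
    ∧ (L ^ 2 - 4 * d * A = (1 / R ^ 2) * (Astar - A) ^ 2
      ↔ ∀ i, θ i = π / n) := by
  obtain ⟨hα_pos, hα_lt⟩ := pi_div_natCast_mem_Ioo hn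
  set α := π / n with hα_def
  have hα : α ∈ Icc 0 (π / 2) := ⟨hα_pos.le, hα_lt.le⟩
  have hcos : 0 < cos α := cos_pos_of_mem_Ioo ⟨by linarith [pi_pos], hα_lt⟩
  have hθ' : ∀ i, θ i ∈ Icc 0 (π / 2) := fun i => Ioo_subset_Icc_self (hθ i)
  have hsum' : ∑ i, θ i = Fintype.card (Fin n) * α := by
    rw [hsum, Fintype.card_fin, hα_def, mul_div_cancel₀ _ (by positivity)]
  have hkey := card_mul_sin_mul_cos_add_sum_le hθ' hα hsum'
  rw [Fintype.card_fin] at hkey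
  set S := ∑ i, sin (θ i)
  set q := ∑ i, sin (θ i) * cos (θ i)
  have hpos : 0 < n * (sin α * cos α) + q := add_pos_of_pos_of_nonneg
    (mul_pos (by positivity) (mul_pos (sin_pos_of_pos_of_lt_pi hα_pos (by linarith)) hcos))
    (Finset.sum_nonneg fun i _ => sin_mul_cos_nonneg (hθ' i))
  have hLHS : L ^ 2 - 4 * d * A = R ^ 2 * (4 * S ^ 2 - 4 * n * tan α * q) := by
    rw [hL, hA, hd]; ring
  have hRHS : 1 / R ^ 2 * (Astar - A) ^ 2 = R ^ 2 * (n * sin α * cos α - q) ^ 2 := by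
    rw [hAstar, hA]; field_simp
  rw [hLHS, hRHS, mul_right_inj' (by positivity)]
  refine ⟨mul_le_mul_of_nonneg_left (sq_sub_le_of_le_two_cos_mul hcos hpos.le hkey)
    (sq_nonneg R), fun heq => ?_, fun hreg => ?_⟩
  · refine (card_mul_sin_mul_cos_add_sum_eq_iff hθ' hα hsum').1 ?_
    rw [Fintype.card_fin]
    exact two_cos_mul_eq_of_sq_sub_eq hpos hkey heq
  · simpa [S, q, hreg] using four_sq_sub_eq_of_regular hcos.ne' n
end

section
/- Let Λ_n be a convex n-gon inscribed in a circle of radius R with half central angles θ_1,…,θ_n ∈ (0,π/2) summing to π, perimeter L_n = 2R ∑ sin θ_i and area A_n = R² ∑ sin θ_i cos θ_i, and let d_n = n tan(π/n). Then L_n² − 4 d_n A_n ≥ 0, with equality if and only if θ_1 = ⋯ = θ_n = π/n. -/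
/-!
Let `t = π / n`, the mean of the `θᵢ`. On `[0, π/2]` the tangent-line bound
`sin θ cos θ ≤ 2 cos t sin θ - sin t cos t - (θ - t)` holds, with equality only at `θ = t`:
the gap has derivative `2 cos θ (cos t - cos θ)`, which changes sign only at `θ = t`.
The coefficients are chosen so that, writing `S = ∑ sin θᵢ`, summing the bound gives
`S² - n tan t · ∑ sin θᵢ cos θᵢ = (S - n sin t)² + n tan t · ∑ gapᵢ ≥ 0`.
-/

open Real Set

noncomputable def tangentGap (t θ : ℝ) : ℝ :=
  2 * cos t * sin θ - sin t * cos t - (θ - t) - sin θ * cos θ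

lemma hasDerivAt_tangentGap (t x : ℝ) :
    HasDerivAt (tangentGap t) (2 * cos x * (cos t - cos x)) x := by
  have h : HasDerivAt (tangentGap t)
      (2 * cos t * cos x - 1 - (cos x * cos x + sin x * -sin x)) x :=
    ((((hasDerivAt_sin x).const_mul (2 * cos t)).sub_const (sin t * cos t)).sub
      ((hasDerivAt_id x).sub_const t)).sub ((hasDerivAt_sin x).mul (hasDerivAt_cos x))
  exact h.congr_deriv (by linear_combination sin_sq_add_cos_sq x)

lemma tangentGap_self (t : ℝ) : tangentGap t t = 0 := by
  unfold tangentGap; ring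

lemma tangentGap_pos {t θ : ℝ} (ht : t ∈ Icc 0 (π / 2)) (hθ : θ ∈ Icc 0 (π / 2))
    (hne : θ ≠ t) : 0 < tangentGap t θ := by
  have hcont : Continuous (tangentGap t) := by unfold tangentGap; fun_prop
  rw [← tangentGap_self t]
  rcases hne.lt_or_gt with hlt | hgt
  · refine strictAntiOn_of_hasDerivWithinAt_neg (convex_Icc 0 t) hcont.continuousOn
      (fun x _ => (hasDerivAt_tangentGap t x).hasDerivWithinAt) ?_
      ⟨hθ.1, hlt.le⟩ ⟨hθ.1.trans hlt.le, le_rfl⟩ hlt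
    rw [interior_Icc]
    rintro x ⟨hx0, hxt⟩
    have hcos : 0 < cos x := cos_pos_of_mem_Ioo ⟨by linarith [pi_pos], by linarith [ht.2]⟩
    exact mul_neg_of_pos_of_neg (mul_pos two_pos hcos)
      (sub_neg.mpr (cos_lt_cos_of_nonneg_of_le_pi_div_two hx0.le ht.2 hxt))
  · refine strictMonoOn_of_hasDerivWithinAt_pos (convex_Icc t (π / 2)) hcont.continuousOn
      (fun x _ => (hasDerivAt_tangentGap t x).hasDerivWithinAt) ?_
      ⟨le_rfl, ht.2⟩ ⟨hgt.le, hθ.2⟩ hgt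
    rw [interior_Icc]
    rintro x ⟨htx, hx⟩
    have hcos : 0 < cos x := cos_pos_of_mem_Ioo ⟨by linarith [ht.1, pi_pos], hx⟩
    exact mul_pos (mul_pos two_pos hcos)
      (sub_pos.mpr (cos_lt_cos_of_nonneg_of_le_pi_div_two ht.1 hx.le htx))

lemma tangentGap_nonneg {t θ : ℝ} (ht : t ∈ Icc 0 (π / 2)) (hθ : θ ∈ Icc 0 (π / 2)) :
    0 ≤ tangentGap t θ := by
  rcases eq_or_ne θ t with rfl | hne
  · exact (tangentGap_self θ).ge
  · exact (tangentGap_pos ht hθ hne).le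

section

variable {ι : Type*} [Fintype ι] {θ : ι → ℝ} {t : ℝ}

lemma sq_sum_sin_sub_card_mul_tan_mul_sum_sin_mul_cos
    (hmean : ∑ i, θ i = Fintype.card ι * t) (ht : cos t ≠ 0) :
    (∑ i, sin (θ i)) ^ 2 - Fintype.card ι * tan t * ∑ i, sin (θ i) * cos (θ i)
      = (∑ i, sin (θ i) - Fintype.card ι * sin t) ^ 2
        + Fintype.card ι * tan t * ∑ i, tangentGap t (θ i) := by
  simp only [tangentGap, Finset.sum_sub_distrib, ← Finset.mul_sum, Finset.sum_const,
    Finset.card_univ, nsmul_eq_mul, hmean, tan_eq_sin_div_cos]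
  field_simp
  ring

lemma card_mul_tan_mul_sum_sin_mul_cos_le (hmean : ∑ i, θ i = Fintype.card ι * t)
    (ht : t ∈ Ico 0 (π / 2)) (hθ : ∀ i, θ i ∈ Icc 0 (π / 2)) :
    Fintype.card ι * tan t * ∑ i, sin (θ i) * cos (θ i) ≤ (∑ i, sin (θ i)) ^ 2 := by
  have hcos : cos t ≠ 0 := (cos_pos_of_mem_Ioo ⟨by linarith [ht.1, pi_pos], ht.2⟩).ne'
  have htan : 0 ≤ tan t := tan_nonneg_of_nonneg_of_le_pi_div_two ht.1 ht.2.le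
  have hgap : 0 ≤ ∑ i, tangentGap t (θ i) :=
    Finset.sum_nonneg fun i _ => tangentGap_nonneg (Ico_subset_Icc_self ht) (hθ i)
  rw [← sub_nonneg, sq_sum_sin_sub_card_mul_tan_mul_sum_sin_mul_cos hmean hcos]
  exact add_nonneg (sq_nonneg _) (mul_nonneg (mul_nonneg (Nat.cast_nonneg _) htan) hgap)

lemma card_mul_tan_mul_sum_sin_mul_cos_eq_iff (hmean : ∑ i, θ i = Fintype.card ι * t)
    (ht : t ∈ Ioo 0 (π / 2)) (hθ : ∀ i, θ i ∈ Icc 0 (π / 2)) :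
    Fintype.card ι * tan t * ∑ i, sin (θ i) * cos (θ i) = (∑ i, sin (θ i)) ^ 2
      ↔ ∀ i, θ i = t := by
  have hcos : 0 < cos t := cos_pos_of_mem_Ioo ⟨by linarith [ht.1, pi_pos], ht.2⟩
  have htan : 0 < tan t := tan_pos_of_pos_of_lt_pi_div_two ht.1 ht.2
  have hgap : ∀ i, 0 ≤ tangentGap t (θ i) :=
    fun i => tangentGap_nonneg (Ioo_subset_Icc_self ht) (hθ i)
  rw [eq_comm, ← sub_eq_zero, sq_sum_sin_sub_card_mul_tan_mul_sum_sin_mul_cos hmean hcos.ne']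
  constructor
  · intro h i
    by_contra hne
    have : 0 < ∑ j, tangentGap t (θ j) := Finset.sum_pos' (fun j _ => hgap j)
      ⟨i, Finset.mem_univ i, tangentGap_pos (Ioo_subset_Icc_self ht) (hθ i) hne⟩
    have : (0 : ℝ) < Fintype.card ι := Nat.cast_pos.mpr (Fintype.card_pos_iff.mpr ⟨i⟩)
    have : 0 < Fintype.card ι * tan t * ∑ j, tangentGap t (θ j) := by positivity
    linarith [sq_nonneg (∑ i, sin (θ i) - Fintype.card ι * sin t)]
  · intro h
    simp [h, tangentGap_self]

end

open Real in
theorem stmt19 (n : ℕ) (hn : 3 ≤ n) (R : ℝ) (hR : 0 < R)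
    (θ : Fin n → ℝ) (hθ : ∀ i, θ i ∈ Set.Ioo (0:ℝ) (π / 2))
    (hsum : ∑ i, θ i = π)
    (L A d : ℝ)
    (hL : L = 2 * R * ∑ i, sin (θ i))
    (hA : A = R ^ 2 * ∑ i, sin (θ i) * cos (θ i))
    (hd : d = (n : ℝ) * tan (π / n)) :
    0 ≤ L ^ 2 - 4 * d * A
    ∧ (L ^ 2 - 4 * d * A = 0 ↔ ∀ i, θ i = π / n) := by
  have hn' : (3 : ℝ) ≤ n := by exact_mod_cast hn
  have ht : π / n ∈ Ioo 0 (π / 2) :=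
    ⟨by positivity, div_lt_div_of_pos_left pi_pos two_pos (by linarith)⟩
  have hmean : ∑ i, θ i = Fintype.card (Fin n) * (π / n) := by
    rw [hsum, Fintype.card_fin]; field_simp
  have hθ' : ∀ i, θ i ∈ Icc 0 (π / 2) := fun i => Ioo_subset_Icc_self (hθ i)
  have hdefect : L ^ 2 - 4 * d * A = 4 * R ^ 2 * ((∑ i, sin (θ i)) ^ 2
      - Fintype.card (Fin n) * tan (π / n) * ∑ i, sin (θ i) * cos (θ i)) := by
    rw [hL, hA, hd, Fintype.card_fin]; ring
  have hR2 : 4 * R ^ 2 ≠ 0 := by positivity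
  rw [hdefect, mul_eq_zero, or_iff_right hR2, sub_eq_zero, eq_comm,
    card_mul_tan_mul_sum_sin_mul_cos_eq_iff hmean ht hθ']
  exact ⟨mul_nonneg (by positivity) (sub_nonneg.mpr
    (card_mul_tan_mul_sum_sin_mul_cos_le hmean (Ioo_subset_Ico_self ht) hθ')), Iff.rfl⟩
end
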